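/- arXiv:1212.0834 — 12 statements merged into one kernel-verified Lean document; each statement's English description precedes it below -/
import Mathlib

section
/- Comparison principle for uniformly elliptic PDEs on graphs: Let G be a finite weighted directed graph with nonempty boundary ∂V which is connected to the boundary, and let F be a uniformly elliptic PDE on G. If u, v : V → ℝ satisfy F(u)(x) ≥ F(v)(x) for all x ∈ V, then u(x) ≤ v(x) for all x ∈ V. -/
/-!
If `u - v` had a positive maximum `M`, the boundary condition `F v ≤ F u` would keep it off the
boundary, and at an interior maximiser `x` ellipticity forbids any neighbour `y` with
`u y - v y < M`: there `∇u x ≤ ∇v x` with strict inequality at `y`, while `u x ≥ v x`, so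
`F u x < F v x`. Hence the set of maximisers is closed under edges, and following a path from a
maximiser to the boundary gives a contradiction.
-/

section Comparison

variable {V : Type*} (adj : V → V → Prop) (w : V → V → ℝ)

def grad (u : V → ℝ) (x : V) : {y : V // adj x y} → ℝ :=
  fun y => w x y.1 * (u y.1 - u x)

variable {adj w} {u v : V → ℝ} {x : V}

theorem grad_le_grad_of_sub_le (hw : ∀ y, adj x y → 0 ≤ w x y)
    (hmax : ∀ y, u y - v y ≤ u x - v x) : grad adj w u x ≤ grad adj w v x := fun y =>
  mul_le_mul_of_nonneg_left (by linarith [hmax y.1]) (hw y.1 y.2)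

theorem grad_lt_grad_of_sub_lt {y : V} (hxy : adj x y) (hw : 0 < w x y)
    (hy : u y - v y < u x - v x) : grad adj w u x ⟨y, hxy⟩ < grad adj w v x ⟨y, hxy⟩ :=
  mul_lt_mul_of_pos_left (by linarith) hw

theorem sub_eq_of_adj_of_forall_sub_le {f : ℝ → ({y : V // adj x y} → ℝ) → ℝ}
    (hUE : ∀ (r s : ℝ) (p q : {y : V // adj x y} → ℝ),
      s ≤ r → p ≤ q → (∃ i, p i < q i) → f r p < f s q)
    (hw : ∀ y, adj x y → 0 < w x y) (hmax : ∀ y, u y - v y ≤ u x - v x) (hvu : v x ≤ u x)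
    (hF : f (v x) (grad adj w v x) ≤ f (u x) (grad adj w u x)) {y : V} (hxy : adj x y) :
    u y - v y = u x - v x := by
  by_contra hne
  have hlt : u y - v y < u x - v x := lt_of_le_of_ne (hmax y) hne
  have := hUE (u x) (v x) _ _ hvu (grad_le_grad_of_sub_le (fun y h => (hw y h).le) hmax)
    ⟨⟨y, hxy⟩, grad_lt_grad_of_sub_lt hxy (hw y hxy) hlt⟩
  linarith

end Comparison

theorem comparison_uniformly_elliptic_general
    {V : Type*} [Fintype V]
    (adj : V → V → Prop) (w : V → V → ℝ) (B : Set V)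
    (hw : ∀ x y : V, adj x y → 0 < w x y)
    (hconn : ∀ x : V, ∃ y ∈ B, Relation.ReflTransGen adj x y)
    (f : (x : V) → ℝ → ({y : V // adj x y} → ℝ) → ℝ)
    (g : V → ℝ)
    (F : (V → ℝ) → V → ℝ)
    (hFint : ∀ (u : V → ℝ) (x : V), x ∉ B →
      F u x = f x (u x) (fun y => w x y.1 * (u y.1 - u x)))
    (hFbd : ∀ (u : V → ℝ) (x : V), x ∈ B → F u x = g x - u x)
    (hUE : ∀ x : V, x ∉ B → ∀ (r s : ℝ) (p q : {y : V // adj x y} → ℝ),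
      s ≤ r → p ≤ q → (∃ i, p i < q i) → f x r p < f x s q)
    (u v : V → ℝ)
    (h : ∀ x : V, F v x ≤ F u x) :
    ∀ x : V, u x ≤ v x := by
  by_contra! ⟨x₀, hx₀⟩
  have : Nonempty V := ⟨x₀⟩
  obtain ⟨z, hz⟩ := Finite.exists_max fun x => u x - v x
  have hpos : 0 < u z - v z := by linarith [hz x₀]
  have hbdry : ∀ x ∈ B, u x - v x ≤ 0 := fun x hx => by
    linarith [h x, hFbd u x hx, hFbd v x hx]
  have hmax_interior : ∀ x, u x - v x = u z - v z → x ∉ B := fun x hx hxB => by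
    linarith [hbdry x hxB]
  have hstep : ∀ x y, u x - v x = u z - v z → adj x y → u y - v y = u z - v z := by
    intro x y hx hxy
    have hxB := hmax_interior x hx
    rw [← hx]
    have hF := h x
    rw [hFint u x hxB, hFint v x hxB] at hF
    exact sub_eq_of_adj_of_forall_sub_le (hUE x hxB) (hw x) (fun y => hx ▸ hz y)
      (by linarith) hF hxy
  obtain ⟨b, hbB, hzb⟩ := hconn z
  refine hmax_interior b ?_ hbB
  clear hbB
  induction hzb with
  | refl => rfl
  | tail _ hcd ih => exact hstep _ _ ih hcd

theorem comparison_uniformly_elliptic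
    {V : Type*} [Fintype V]
    (adj : V → V → Prop) (w : V → V → ℝ) (B : Set V)
    (hB : B.Nonempty)
    (hne : ∀ x y : V, adj x y → x ≠ y)
    (hw : ∀ x y : V, adj x y → 0 < w x y)
    (hdeg : ∀ x : V, x ∉ B → ∃ y : V, adj x y)
    (hconn : ∀ x : V, ∃ y ∈ B, Relation.ReflTransGen adj x y)
    (f : (x : V) → ℝ → ({y : V // adj x y} → ℝ) → ℝ)
    (g : V → ℝ)
    (F : (V → ℝ) → V → ℝ)
    (hFint : ∀ (u : V → ℝ) (x : V), x ∉ B →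
      F u x = f x (u x) (fun y => w x y.1 * (u y.1 - u x)))
    (hFbd : ∀ (u : V → ℝ) (x : V), x ∈ B → F u x = g x - u x)
    (hUE : ∀ x : V, x ∉ B → ∀ (r s : ℝ) (p q : {y : V // adj x y} → ℝ),
      s ≤ r → p ≤ q → (∃ i, p i < q i) → f x r p < f x s q)
    (u v : V → ℝ)
    (h : ∀ x : V, F v x ≤ F u x) :
    ∀ x : V, u x ≤ v x :=
  comparison_uniformly_elliptic_general adj w B hw hconn f g F hFint hFbd hUE u v h
end

section
/- Comparison principle for proper PDEs on graphs: Let G be a finite weighted directed graph with nonempty boundary ∂V which is connected to the boundary, and let F be a proper PDE on G. If u, v : V → ℝ satisfy F(u)(x) ≥ F(v)(x) for all x ∈ V, then u(x) ≤ v(x) for all x ∈ V. -/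
/-!
Take a vertex `x₀` where `u - v` is largest. There every difference quotient of `u` is at most
the corresponding one of `v`, so `∇u(x₀) ≤ ∇v(x₀)`. If `u(x₀) > v(x₀)`, properness would give
`F(u)(x₀) < F(v)(x₀)` at an interior vertex, and `g - u < g - v` says the same at a boundary
vertex. Hence `u - v ≤ u(x₀) - v(x₀) ≤ 0` everywhere.
-/

section

variable {V : Type*} (adj : V → V → Prop) (w : V → V → ℝ)

lemma gradient_le_of_forall_sub_le {u v : V → ℝ} {x : V}
    (hw : ∀ y, adj x y → 0 ≤ w x y) (hx : ∀ y, u y - v y ≤ u x - v x) :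
    (fun y : {y : V // adj x y} => w x y.1 * (u y.1 - u x)) ≤
      (fun y : {y : V // adj x y} => w x y.1 * (v y.1 - v x)) := fun y =>
  mul_le_mul_of_nonneg_left (by linarith [hx y.1]) (hw y.1 y.2)

lemma le_of_forall_sub_le_of_proper (B : Set V)
    (hw : ∀ x y, adj x y → 0 < w x y)
    (f : (x : V) → ℝ → ({y : V // adj x y} → ℝ) → ℝ) (g : V → ℝ) (F : (V → ℝ) → V → ℝ)
    (hFint : ∀ (u : V → ℝ) (x : V), x ∉ B →
      F u x = f x (u x) (fun y => w x y.1 * (u y.1 - u x)))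
    (hFbd : ∀ (u : V → ℝ) (x : V), x ∈ B → F u x = g x - u x)
    (hProper : ∀ x : V, x ∉ B → ∀ (r s : ℝ) (p q : {y : V // adj x y} → ℝ),
      s < r → p ≤ q → f x r p < f x s q)
    {u v : V → ℝ} (h : ∀ x, F v x ≤ F u x) {x : V} (hx : ∀ y, u y - v y ≤ u x - v x) :
    u x ≤ v x := by
  have hFx := h x
  by_cases hxB : x ∈ B
  · rw [hFbd u x hxB, hFbd v x hxB] at hFx
    linarith
  · by_contra! hlt
    have hgrad := gradient_le_of_forall_sub_le adj w (fun y hy => (hw x y hy).le) hx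
    rw [hFint u x hxB, hFint v x hxB] at hFx
    exact (hProper x hxB _ _ _ _ hlt hgrad).not_ge hFx

end

theorem comparison_proper_general
    {V : Type*} [Fintype V]
    (adj : V → V → Prop) (w : V → V → ℝ) (B : Set V)
    (hw : ∀ x y : V, adj x y → 0 < w x y)
    (f : (x : V) → ℝ → ({y : V // adj x y} → ℝ) → ℝ)
    (g : V → ℝ)
    (F : (V → ℝ) → V → ℝ)
    (hFint : ∀ (u : V → ℝ) (x : V), x ∉ B →
      F u x = f x (u x) (fun y => w x y.1 * (u y.1 - u x)))
    (hFbd : ∀ (u : V → ℝ) (x : V), x ∈ B → F u x = g x - u x)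
    (hProper : ∀ x : V, x ∉ B → ∀ (r s : ℝ) (p q : {y : V // adj x y} → ℝ),
      s < r → p ≤ q → f x r p < f x s q)
    (u v : V → ℝ)
    (h : ∀ x : V, F v x ≤ F u x) :
    ∀ x : V, u x ≤ v x := by
  intro x
  have : Nonempty V := ⟨x⟩
  obtain ⟨x₀, hx₀⟩ := Finite.exists_max fun y => u y - v y
  have hmax := le_of_forall_sub_le_of_proper adj w B hw f g F hFint hFbd hProper h hx₀
  linarith [hx₀ x]

theorem comparison_proper
    {V : Type*} [Fintype V]
    (adj : V → V → Prop) (w : V → V → ℝ) (B : Set V)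
    (hB : B.Nonempty)
    (hne : ∀ x y : V, adj x y → x ≠ y)
    (hw : ∀ x y : V, adj x y → 0 < w x y)
    (hdeg : ∀ x : V, x ∉ B → ∃ y : V, adj x y)
    (hconn : ∀ x : V, ∃ y ∈ B, Relation.ReflTransGen adj x y)
    (f : (x : V) → ℝ → ({y : V // adj x y} → ℝ) → ℝ)
    (g : V → ℝ)
    (F : (V → ℝ) → V → ℝ)
    (hFint : ∀ (u : V → ℝ) (x : V), x ∉ B →
      F u x = f x (u x) (fun y => w x y.1 * (u y.1 - u x)))
    (hFbd : ∀ (u : V → ℝ) (x : V), x ∈ B → F u x = g x - u x)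
    (hProper : ∀ x : V, x ∉ B → ∀ (r s : ℝ) (p q : {y : V // adj x y} → ℝ),
      s < r → p ≤ q → f x r p < f x s q)
    (u v : V → ℝ)
    (h : ∀ x : V, F v x ≤ F u x) :
    ∀ x : V, u x ≤ v x :=
  comparison_proper_general adj w B hw f g F hFint hFbd hProper u v h
end

section
/- Comparison principle under a condition weaker than both properness and uniform ellipticity: Let G be a finite weighted directed graph with nonempty boundary ∂V which is connected to the boundary, and let F be a PDE on G whose interior function f satisfies: for every interior vertex x, r > s and p < q imply f(x,r,p) < f(x,s,q). If u, v : V → ℝ satisfy F(u)(x) ≥ F(v)(x) for all x ∈ V, then u(x) ≤ v(x) for all x ∈ V. -/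
/-!
Suppose `u - v` is positive somewhere and let `M > 0` be its maximum. On the boundary
`F v ≤ F u` forces `u ≤ v`, so the maximum is attained only at interior vertices. At such a
vertex `x` every neighbour `y` has `u y - v y ≤ u x - v x`, i.e. `∇u x ≤ ∇v x`; if one of these
inequalities were strict, the structure condition with `u x > v x` would give `F u x < F v x`.
Hence the maximum spreads to all neighbours, then along a path to the boundary: a contradiction.
-/

open Relation

theorem Relation.ReflTransGen.of_forall_rel_imp {α : Type*} {r : α → α → Prop} {P : α → Prop}
    (hP : ∀ a b, r a b → P a → P b) {a b : α} (hab : ReflTransGen r a b) (ha : P a) : P b := by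
  induction hab with
  | refl => exact ha
  | tail _ hbc ih => exact hP _ _ hbc ih

namespace WeightedDigraph

variable {V : Type*} {adj : V → V → Prop}

def grad (w : V → V → ℝ) (u : V → ℝ) (x : V) : {y : V // adj x y} → ℝ :=
  fun y => w x y.1 * (u y.1 - u x)

theorem grad_le_grad_iff_sub_le {w : V → V → ℝ} {x : V} {y : {y : V // adj x y}}
    (hw : 0 < w x y.1) (u v : V → ℝ) :
    grad w u x y ≤ grad w v x y ↔ u y.1 - v y.1 ≤ u x - v x := by
  unfold grad
  rw [mul_le_mul_iff_of_pos_left hw]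
  constructor <;> intro h <;> linarith

theorem grad_lt_grad_iff_sub_lt {w : V → V → ℝ} {x : V} {y : {y : V // adj x y}}
    (hw : 0 < w x y.1) (u v : V → ℝ) :
    grad w u x y < grad w v x y ↔ u y.1 - v y.1 < u x - v x := by
  unfold grad
  rw [mul_lt_mul_iff_of_pos_left hw]
  constructor <;> intro h <;> linarith

theorem sub_eq_of_adj_of_forall_sub_le {w : V → V → ℝ}
    {f : (x : V) → ℝ → ({y : V // adj x y} → ℝ) → ℝ} {x : V}
    (hw : ∀ y, adj x y → 0 < w x y)
    (hf : ∀ (r s : ℝ) (p q : {y : V // adj x y} → ℝ),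
      s < r → p ≤ q → (∃ i, p i < q i) → f x r p < f x s q)
    {u v : V → ℝ} (huv : f x (v x) (grad w v x) ≤ f x (u x) (grad w u x))
    (hpos : v x < u x) (hmax : ∀ y, adj x y → u y - v y ≤ u x - v x)
    {y : V} (hy : adj x y) : u y - v y = u x - v x := by
  by_contra hne
  have hlt : grad w u x ⟨y, hy⟩ < grad w v x ⟨y, hy⟩ :=
    (grad_lt_grad_iff_sub_lt (hw y hy) u v).2 (lt_of_le_of_ne (hmax y hy) hne)
  have hgrad : grad w u x ≤ grad w v x := fun z =>
    (grad_le_grad_iff_sub_le (hw z.1 z.2) u v).2 (hmax z.1 z.2)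
  exact (hf _ _ _ _ hpos hgrad ⟨_, hlt⟩).not_ge huv

end WeightedDigraph

open WeightedDigraph

theorem comparison_weak_condition_general
    {V : Type*} [Fintype V]
    (adj : V → V → Prop) (w : V → V → ℝ) (B : Set V)
    (hw : ∀ x y : V, adj x y → 0 < w x y)
    (hconn : ∀ x : V, ∃ y ∈ B, Relation.ReflTransGen adj x y)
    (f : (x : V) → ℝ → ({y : V // adj x y} → ℝ) → ℝ)
    (g : V → ℝ)
    (F : (V → ℝ) → V → ℝ)
    (hFint : ∀ (u : V → ℝ) (x : V), x ∉ B →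
      F u x = f x (u x) (fun y => w x y.1 * (u y.1 - u x)))
    (hFbd : ∀ (u : V → ℝ) (x : V), x ∈ B → F u x = g x - u x)
    (hWeak : ∀ x : V, x ∉ B → ∀ (r s : ℝ) (p q : {y : V // adj x y} → ℝ),
      s < r → p ≤ q → (∃ i, p i < q i) → f x r p < f x s q)
    (u v : V → ℝ)
    (h : ∀ x : V, F v x ≤ F u x) :
    ∀ x : V, u x ≤ v x := by
  intro x₀
  by_contra! hx₀
  obtain ⟨m, -, hm⟩ := Finset.exists_max_image Finset.univ (fun x => u x - v x)
    ⟨x₀, Finset.mem_univ x₀⟩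
  have hmax : ∀ x, u x - v x ≤ u m - v m := fun x => hm x (Finset.mem_univ x)
  have hbd : ∀ b ∈ B, u b ≤ v b := fun b hb => by
    have := h b
    rw [hFbd u b hb, hFbd v b hb] at this
    linarith
  have hclosed : ∀ x y, adj x y → u x - v x = u m - v m → u y - v y = u m - v m := by
    intro x y hxy hx
    have hxB : x ∉ B := fun hxB => by linarith [hbd x hxB, hmax x₀]
    have hle := h x
    rw [hFint u x hxB, hFint v x hxB] at hle
    rw [← hx]
    exact sub_eq_of_adj_of_forall_sub_le (hw x) (hWeak x hxB) hle
      (by linarith [hmax x₀]) (fun z _ => hx ▸ hmax z) hxy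
  obtain ⟨b, hb, hpath⟩ := hconn m
  have hbmax : u b - v b = u m - v m := hpath.of_forall_rel_imp hclosed rfl
  linarith [hbd b hb, hmax x₀]

theorem comparison_weak_condition
    {V : Type*} [Fintype V]
    (adj : V → V → Prop) (w : V → V → ℝ) (B : Set V)
    (hB : B.Nonempty)
    (hne : ∀ x y : V, adj x y → x ≠ y)
    (hw : ∀ x y : V, adj x y → 0 < w x y)
    (hdeg : ∀ x : V, x ∉ B → ∃ y : V, adj x y)
    (hconn : ∀ x : V, ∃ y ∈ B, Relation.ReflTransGen adj x y)
    (f : (x : V) → ℝ → ({y : V // adj x y} → ℝ) → ℝ)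
    (g : V → ℝ)
    (F : (V → ℝ) → V → ℝ)
    (hFint : ∀ (u : V → ℝ) (x : V), x ∉ B →
      F u x = f x (u x) (fun y => w x y.1 * (u y.1 - u x)))
    (hFbd : ∀ (u : V → ℝ) (x : V), x ∈ B → F u x = g x - u x)
    (hWeak : ∀ x : V, x ∉ B → ∀ (r s : ℝ) (p q : {y : V // adj x y} → ℝ),
      s < r → p ≤ q → (∃ i, p i < q i) → f x r p < f x s q)
    (u v : V → ℝ)
    (h : ∀ x : V, F v x ≤ F u x) :
    ∀ x : V, u x ≤ v x :=
  comparison_weak_condition_general adj w B hw hconn f g F hFint hFbd hWeak u v h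
end

section
/- Comparison (uniqueness) for positive eikonal equations: Let G be a finite weighted directed graph with nonempty boundary ∂V which is connected to the boundary, and let F be a positive eikonal equation on G. If u, v : V → ℝ satisfy F(u)(x) = F(v)(x) = 0 for all interior x, and u(x) ≤ v(x) for all x ∈ ∂V, then u(x) ≤ v(x) for all x ∈ V. -/
/-!
STATEMENT 5: Comparison (uniqueness) for positive eikonal equations on a
finite weighted directed graph connected to its nonempty boundary.

`eikP adj w u x` is `‖∇u(x)‖⁺ = max_{y ~ x} w x y * (u y - u x)` (the
supremum below, over the finite nonempty neighbor set, is this maximum).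
A positive eikonal equation is
`F u x = w₊ x * ‖∇u(x)‖⁺ + f x (∇u x) - g x` at interior vertices, where
`w₊ > 0`, `g > 0` and `f` is elliptic and homogeneous; homogeneity means
`w₀ x * min p ≤ f x p ≤ w₀ x * max p` for a nonnegative `w₀` (here
`min p = sInf (Set.range p)` and `max p = sSup (Set.range p)` over the
finite nonempty index set of neighbors).
-/

/-- The positive eikonal operator `‖∇u(x)‖⁺` on a weighted directed graph. -/
noncomputable def eikP {V : Type*} (adj : V → V → Prop) (w : V → V → ℝ)
    (u : V → ℝ) (x : V) : ℝ :=
  sSup (Set.range fun y : {y : V // adj x y} => w x y.1 * (u y.1 - u x))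

/-!
Suppose `u - v` attains a positive maximum `M`; boundary vertices cannot attain it, so every
maximizer `x` is interior. There `∇u(x) ≤ ∇v(x)`, so by ellipticity both terms of `F` are
smaller for `u` than for `v`; since both equations vanish, `‖∇u(x)‖⁺ = ‖∇v(x)‖⁺`, and
homogeneity together with `g > 0` makes this common value positive. A neighbor `y` realizing
`‖∇u(x)‖⁺` then satisfies `u y - u x = v y - v x > 0`: it is again a maximizer, with a strictly
larger value of `u`. Taking `x` to maximize `u` among the maximizers gives a contradiction.
-/

open Set

section Eikonal

variable {V : Type*} (adj : V → V → Prop) (w : V → V → ℝ)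

def graphGrad (u : V → ℝ) (x : V) : {y : V // adj x y} → ℝ :=
  fun y => w x y.1 * (u y.1 - u x)

variable {adj w}

theorem eikP_mono [Finite V] {u v : V → ℝ} {x : V}
    (h : graphGrad adj w u x ≤ graphGrad adj w v x) : eikP adj w u x ≤ eikP adj w v x :=
  ciSup_mono (finite_range _).bddAbove h

theorem exists_graphGrad_eq_eikP [Finite V] (u : V → ℝ) {x : V} (hx : ∃ y, adj x y) :
    ∃ y, graphGrad adj w u x y = eikP adj w u x :=
  have : Nonempty {y // adj x y} := let ⟨y, hy⟩ := hx; ⟨⟨y, hy⟩⟩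
  exists_eq_ciSup_of_finite

theorem graphGrad_le_of_sub_le {u v : V → ℝ} {x : V} (hw : ∀ y, adj x y → 0 ≤ w x y)
    (hmax : ∀ y, u y - v y ≤ u x - v x) : graphGrad adj w u x ≤ graphGrad adj w v x :=
  fun y => mul_le_mul_of_nonneg_left (by linarith [hmax y.1]) (hw y.1 y.2)

theorem exists_adj_ascent_of_sub_le [Finite V] {u v : V → ℝ} {x : V}
    (hw : ∀ y, adj x y → 0 < w x y) (hx : ∃ y, adj x y)
    {f : ({y // adj x y} → ℝ) → ℝ} (hf : Monotone f) {a b g : ℝ}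
    (ha : 0 < a) (hb : 0 ≤ b) (hg : 0 < g)
    (hfb : f (graphGrad adj w u x) ≤ b * eikP adj w u x)
    (hu : a * eikP adj w u x + f (graphGrad adj w u x) - g = 0)
    (hv : a * eikP adj w v x + f (graphGrad adj w v x) - g = 0)
    (hmax : ∀ y, u y - v y ≤ u x - v x) :
    ∃ y, adj x y ∧ u y - v y = u x - v x ∧ u x < u y := by
  have hle := graphGrad_le_of_sub_le (fun y hy => (hw y hy).le) hmax
  -- both summands of the equation are monotone in the gradient, and the two sums agree
  have heik : eikP adj w u x = eikP adj w v x := by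
    have := eikP_mono hle
    have := hf hle
    nlinarith
  -- `(a + b) * ‖∇u(x)‖⁺ ≥ g > 0`
  have hpos : 0 < eikP adj w u x := by nlinarith
  obtain ⟨y, hy⟩ := exists_graphGrad_eq_eikP u hx
  have hyv : graphGrad adj w u x y = graphGrad adj w v x y :=
    (hle y).antisymm (hy ▸ heik ▸ le_ciSup (finite_range _).bddAbove y)
  have hwy := hw y.1 y.2
  refine ⟨y.1, y.2, ?_, ?_⟩
  · have := mul_left_cancel₀ hwy.ne' hyv
    linarith
  · rw [← hy] at hpos
    exact sub_pos.1 (pos_of_mul_pos_right hpos hwy.le)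

end Eikonal

theorem eikonal_comparison_general
    {V : Type*} [Fintype V]
    (adj : V → V → Prop) (w : V → V → ℝ) (B : Set V)
    (hw : ∀ x y : V, adj x y → 0 < w x y)
    (hdeg : ∀ x : V, x ∉ B → ∃ y : V, adj x y)
    (f : (x : V) → ({y : V // adj x y} → ℝ) → ℝ)
    (hell : ∀ x : V, x ∉ B → ∀ p q : {y : V // adj x y} → ℝ,
      p ≤ q → f x p ≤ f x q)
    (w0 : V → ℝ) (hw0 : ∀ x : V, x ∉ B → 0 ≤ w0 x)
    (hhom : ∀ (x : V), x ∉ B → ∀ p : {y : V // adj x y} → ℝ,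
      w0 x * sInf (Set.range p) ≤ f x p ∧ f x p ≤ w0 x * sSup (Set.range p))
    (wp g : V → ℝ)
    (hwp : ∀ x : V, x ∉ B → 0 < wp x)
    (hg : ∀ x : V, x ∉ B → 0 < g x)
    (F : (V → ℝ) → V → ℝ)
    (hF : ∀ (u : V → ℝ) (x : V), x ∉ B →
      F u x = wp x * eikP adj w u x
        + f x (fun y => w x y.1 * (u y.1 - u x)) - g x)
    (u v : V → ℝ)
    (hu : ∀ x : V, x ∉ B → F u x = 0)
    (hv : ∀ x : V, x ∉ B → F v x = 0)
    (hbd : ∀ x ∈ B, u x ≤ v x) :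
    ∀ x : V, u x ≤ v x := by
  classical
  by_contra! ⟨z, hz⟩
  obtain ⟨x₀, -, hx₀⟩ := Finset.univ.exists_max_image (fun x => u x - v x) ⟨z, Finset.mem_univ z⟩
  set A := Finset.univ.filter fun x => u x - v x = u x₀ - v x₀
  obtain ⟨x, hxA, hxu⟩ := A.exists_max_image u ⟨x₀, by simp [A]⟩
  have hxA : u x - v x = u x₀ - v x₀ := (Finset.mem_filter.1 hxA).2
  have hmax y : u y - v y ≤ u x - v x := hxA ▸ hx₀ y (Finset.mem_univ y)
  have hxB : x ∉ B := fun hxB => by linarith [hbd x hxB, hmax z]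
  obtain ⟨y, -, hyA, hxy⟩ := exists_adj_ascent_of_sub_le (hw x) (hdeg x hxB)
    (hell x hxB) (hwp x hxB) (hw0 x hxB) (hg x hxB) (hhom x hxB _).2
    ((hF u x hxB).symm.trans (hu x hxB)) ((hF v x hxB).symm.trans (hv x hxB)) hmax
  exact (hxu y (by simp [A, hyA, hxA])).not_gt hxy

theorem eikonal_comparison
    {V : Type*} [Fintype V]
    (adj : V → V → Prop) (w : V → V → ℝ) (B : Set V)
    (hB : B.Nonempty)
    (hne : ∀ x y : V, adj x y → x ≠ y)
    (hw : ∀ x y : V, adj x y → 0 < w x y)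
    (hdeg : ∀ x : V, x ∉ B → ∃ y : V, adj x y)
    (hconn : ∀ x : V, ∃ y ∈ B, Relation.ReflTransGen adj x y)
    (f : (x : V) → ({y : V // adj x y} → ℝ) → ℝ)
    (hell : ∀ x : V, x ∉ B → ∀ p q : {y : V // adj x y} → ℝ,
      p ≤ q → f x p ≤ f x q)
    (w0 : V → ℝ) (hw0 : ∀ x : V, x ∉ B → 0 ≤ w0 x)
    (hhom : ∀ (x : V), x ∉ B → ∀ p : {y : V // adj x y} → ℝ,
      w0 x * sInf (Set.range p) ≤ f x p ∧ f x p ≤ w0 x * sSup (Set.range p))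
    (wp g : V → ℝ)
    (hwp : ∀ x : V, x ∉ B → 0 < wp x)
    (hg : ∀ x : V, x ∉ B → 0 < g x)
    (F : (V → ℝ) → V → ℝ)
    (hF : ∀ (u : V → ℝ) (x : V), x ∉ B →
      F u x = wp x * eikP adj w u x
        + f x (fun y => w x y.1 * (u y.1 - u x)) - g x)
    (u v : V → ℝ)
    (hu : ∀ x : V, x ∉ B → F u x = 0)
    (hv : ∀ x : V, x ∉ B → F v x = 0)
    (hbd : ∀ x ∈ B, u x ≤ v x) :
    ∀ x : V, u x ≤ v x :=
  eikonal_comparison_general adj w B hw hdeg f hell w0 hw0 hhom wp g hwp hg F hF u v hu hv hbd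
end

section
/- Harnack-type lemma for p-harmonious equations: Let G be a finite weighted directed graph, let F be a p-harmonious equation on G, and let x be an interior vertex. If u : V → ℝ satisfies F(u)(x) = 0, then either ‖∇u(x)‖⁻ < 0 < ‖∇u(x)‖⁺ (equivalently, min_i u(y_i) < u(x) < max_i u(y_i) over the neighbors y_i of x), or ∇u(x) is the zero vector. -/
/-- The negative eikonal operator `‖∇u(x)‖⁻` on a weighted directed graph. -/
noncomputable def eikM {V : Type*} (adj : V → V → Prop) (w : V → V → ℝ)
    (u : V → ℝ) (x : V) : ℝ :=
  sInf (Set.range fun y : {y : V // adj x y} => w x y.1 * (u y.1 - u x))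

theorem neg_and_pos_or_nonpos_and_nonneg_of_add_eq_zero {a b c w₀ m M : ℝ}
    (ha : 0 < a) (hb : 0 < b) (hw₀ : 0 ≤ w₀) (hlo : w₀ * m ≤ c) (hhi : c ≤ w₀ * M)
    (h : a * M + b * m + c = 0) :
    (m < 0 ∧ 0 < M) ∨ (M ≤ 0 ∧ 0 ≤ m) := by
  have nonneg_of_nonpos (hM : M ≤ 0) : 0 ≤ m := by
    have hc : c ≤ 0 := hhi.trans (mul_nonpos_of_nonneg_of_nonpos hw₀ hM)
    nlinarith
  have nonpos_of_nonneg (hm : 0 ≤ m) : M ≤ 0 := by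
    have hc : 0 ≤ c := (mul_nonneg hw₀ hm).trans hlo
    nlinarith
  rcases lt_or_ge m 0 with hm | hm
  · rcases lt_or_ge 0 M with hM | hM
    · exact Or.inl ⟨hm, hM⟩
    · exact absurd (nonneg_of_nonpos hM) hm.not_ge
  · exact Or.inr ⟨nonpos_of_nonneg hm, hm⟩

theorem eq_zero_of_iSup_nonpos_of_iInf_nonneg {ι : Type*} [Finite ι] {p : ι → ℝ}
    (hsup : ⨆ i, p i ≤ 0) (hinf : 0 ≤ ⨅ i, p i) : p = 0 := by
  funext i
  exact le_antisymm ((le_ciSup (Set.finite_range p).bddAbove i).trans hsup)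
    (hinf.trans (ciInf_le (Set.finite_range p).bddBelow i))

theorem harnack_p_harmonious_general
    {V : Type*} [Fintype V]
    (adj : V → V → Prop) (w : V → V → ℝ) (B : Set V)
    (f : (x : V) → ({y : V // adj x y} → ℝ) → ℝ)
    (w0 : V → ℝ) (hw0 : ∀ x : V, x ∉ B → 0 ≤ w0 x)
    (hhom : ∀ (x : V), x ∉ B → ∀ p : {y : V // adj x y} → ℝ,
      w0 x * sInf (Set.range p) ≤ f x p ∧ f x p ≤ w0 x * sSup (Set.range p))
    (wp wm : V → ℝ)
    (hwp : ∀ x : V, x ∉ B → 0 < wp x)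
    (hwm : ∀ x : V, x ∉ B → 0 < wm x)
    (F : (V → ℝ) → V → ℝ)
    (hF : ∀ (u : V → ℝ) (x : V), x ∉ B →
      F u x = wp x * eikP adj w u x + wm x * eikM adj w u x
        + f x (fun y => w x y.1 * (u y.1 - u x)))
    (u : V → ℝ) (x : V) (hx : x ∉ B)
    (hsol : F u x = 0) :
    (eikM adj w u x < 0 ∧ 0 < eikP adj w u x) ∨
      (∀ y : V, adj x y → w x y * (u y - u x) = 0) := by
  obtain ⟨hlo, hhi⟩ := hhom x hx fun y => w x y.1 * (u y.1 - u x)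
  rcases neg_and_pos_or_nonpos_and_nonneg_of_add_eq_zero (hwp x hx) (hwm x hx) (hw0 x hx)
      hlo hhi ((hF u x hx).symm.trans hsol) with hstraddle | ⟨hM, hm⟩
  · exact Or.inl hstraddle
  · exact Or.inr fun y hy => congrFun (eq_zero_of_iSup_nonpos_of_iInf_nonneg hM hm) ⟨y, hy⟩

theorem harnack_p_harmonious
    {V : Type*} [Fintype V]
    (adj : V → V → Prop) (w : V → V → ℝ) (B : Set V)
    (hB : B.Nonempty)
    (hne : ∀ x y : V, adj x y → x ≠ y)
    (hw : ∀ x y : V, adj x y → 0 < w x y)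
    (hdeg : ∀ x : V, x ∉ B → ∃ y : V, adj x y)
    (f : (x : V) → ({y : V // adj x y} → ℝ) → ℝ)
    (hell : ∀ x : V, x ∉ B → ∀ p q : {y : V // adj x y} → ℝ,
      p ≤ q → f x p ≤ f x q)
    (w0 : V → ℝ) (hw0 : ∀ x : V, x ∉ B → 0 ≤ w0 x)
    (hhom : ∀ (x : V), x ∉ B → ∀ p : {y : V // adj x y} → ℝ,
      w0 x * sInf (Set.range p) ≤ f x p ∧ f x p ≤ w0 x * sSup (Set.range p))
    (wp wm : V → ℝ)
    (hwp : ∀ x : V, x ∉ B → 0 < wp x)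
    (hwm : ∀ x : V, x ∉ B → 0 < wm x)
    (F : (V → ℝ) → V → ℝ)
    (hF : ∀ (u : V → ℝ) (x : V), x ∉ B →
      F u x = wp x * eikP adj w u x + wm x * eikM adj w u x
        + f x (fun y => w x y.1 * (u y.1 - u x)))
    (u : V → ℝ) (x : V) (hx : x ∉ B)
    (hsol : F u x = 0) :
    (eikM adj w u x < 0 ∧ 0 < eikP adj w u x) ∨
      (∀ y : V, adj x y → w x y * (u y - u x) = 0) :=
  harnack_p_harmonious_general adj w B f w0 hw0 hhom wp wm hwp hwm F hF u x hx hsol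
end

section
/- Comparison (uniqueness) for p-harmonious equations: Let G be a finite weighted directed graph with nonempty boundary ∂V which is connected to the boundary, and let F be a p-harmonious equation on G. If u, v : V → ℝ satisfy F(u)(x) = F(v)(x) = 0 for all interior x, and u(x) ≤ v(x) for all x ∈ ∂V, then u(x) ≤ v(x) for all x ∈ V. -/
theorem Relation.ReflTransGen.mem_of_forall_mem_imp {α : Type*} {r : α → α → Prop}
    {S : Set α} (hS : ∀ a b, a ∈ S → r a b → b ∈ S) {a b : α}
    (h : Relation.ReflTransGen r a b) (ha : a ∈ S) : b ∈ S := by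
  induction h with
  | refl => exact ha
  | tail _ hbc ih => exact hS _ _ ih hbc

noncomputable def pHarmoniousOp {ι : Type*} (a b : ℝ) (φ : (ι → ℝ) → ℝ) (p : ι → ℝ) : ℝ :=
  a * (⨆ i, p i) + b * (⨅ i, p i) + φ p

section PHarmoniousOp

variable {ι : Type*} [Finite ι] {a b c : ℝ} {φ : (ι → ℝ) → ℝ} {p q : ι → ℝ}

theorem eq_zero_of_iSup_eq_zero_of_iInf_eq_zero (hsup : ⨆ i, p i = 0) (hinf : ⨅ i, p i = 0) :
    p = 0 :=
  funext fun i => le_antisymm ((le_ciSup (Finite.bddAbove_range p) i).trans hsup.le)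
    (hinf.ge.trans (ciInf_le (Finite.bddBelow_range p) i))

variable [Nonempty ι]

theorem exists_eq_iSup_of_pHarmoniousOp_eq (ha : 0 < a) (hb : 0 ≤ b) (hφ : Monotone φ)
    (hpq : p ≤ q) (h : pHarmoniousOp a b φ p = pHarmoniousOp a b φ q) :
    ∃ i, p i = ⨆ j, p j ∧ p i = q i := by
  obtain ⟨i, hi⟩ := exists_eq_ciSup_of_finite (f := p)
  have hsup : ⨆ j, p j = ⨆ j, q j := by
    refine le_antisymm (ciSup_mono (Finite.bddAbove_range q) hpq) (le_of_not_gt fun hlt => ?_)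
    have := mul_le_mul_of_nonneg_left (ciInf_mono (Finite.bddBelow_range p) hpq) hb
    have := mul_lt_mul_of_pos_left hlt ha
    have := hφ hpq
    unfold pHarmoniousOp at h
    linarith
  refine ⟨i, hi, le_antisymm (hpq i) ?_⟩
  calc q i ≤ ⨆ j, q j := le_ciSup (Finite.bddAbove_range q) i
    _ = p i := by rw [← hsup, hi]

theorem eq_zero_of_pHarmoniousOp_eq_zero_of_iSup_nonpos (ha : 0 < a) (hb : 0 < b) (hc : 0 ≤ c)
    (hφ : ∀ p, φ p ≤ c * ⨆ i, p i) (h : pHarmoniousOp a b φ p = 0) (hp : ⨆ i, p i ≤ 0) :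
    p = 0 := by
  have hinf : ⨅ i, p i ≤ 0 :=
    (ciInf_le_ciSup (Finite.bddBelow_range p) (Finite.bddAbove_range p)).trans hp
  have hap := mul_nonpos_of_nonneg_of_nonpos ha.le hp
  have hbp := mul_nonpos_of_nonneg_of_nonpos hb.le hinf
  have hφp := (hφ p).trans (mul_nonpos_of_nonneg_of_nonpos hc hp)
  unfold pHarmoniousOp at h
  exact eq_zero_of_iSup_eq_zero_of_iInf_eq_zero
    ((mul_eq_zero.mp (by linarith)).resolve_left ha.ne')
    ((mul_eq_zero.mp (by linarith)).resolve_left hb.ne')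

theorem eq_zero_of_pHarmoniousOp_eq_zero_of_nonneg (ha : 0 < a) (hb : 0 < b) (hc : 0 ≤ c)
    (hφ : ∀ p, c * ⨅ i, p i ≤ φ p) (h : pHarmoniousOp a b φ p = 0) (hp : 0 ≤ p) :
    p = 0 := by
  have hinf : 0 ≤ ⨅ i, p i := le_ciInf hp
  have hsup : 0 ≤ ⨆ i, p i :=
    hinf.trans (ciInf_le_ciSup (Finite.bddBelow_range p) (Finite.bddAbove_range p))
  have hap := mul_nonneg ha.le hsup
  have hbp := mul_nonneg hb.le hinf
  have hφp := (mul_nonneg hc hinf).trans (hφ p)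
  unfold pHarmoniousOp at h
  exact eq_zero_of_iSup_eq_zero_of_iInf_eq_zero
    ((mul_eq_zero.mp (by linarith)).resolve_left ha.ne')
    ((mul_eq_zero.mp (by linarith)).resolve_left hb.ne')

/-- The local form of the comparison principle. -/
theorem eq_zero_of_le_of_pHarmoniousOp_eq_zero (ha : 0 < a) (hb : 0 < b) (hc : 0 ≤ c)
    (hφ : Monotone φ) (hφc : ∀ p, c * ⨅ i, p i ≤ φ p ∧ φ p ≤ c * ⨆ i, p i) (hpq : p ≤ q)
    (hp : pHarmoniousOp a b φ p = 0) (hq : pHarmoniousOp a b φ q = 0)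
    (hcontact : ∀ i, p i = q i → p i ≤ 0) : p = 0 ∧ q = 0 := by
  obtain ⟨i, hi, hpqi⟩ := exists_eq_iSup_of_pHarmoniousOp_eq ha hb.le hφ hpq (hp.trans hq.symm)
  have hp0 : p = 0 := eq_zero_of_pHarmoniousOp_eq_zero_of_iSup_nonpos ha hb hc
    (fun p => (hφc p).2) hp (hi ▸ hcontact i hpqi)
  exact ⟨hp0, eq_zero_of_pHarmoniousOp_eq_zero_of_nonneg ha hb hc (fun p => (hφc p).1) hq
    (hp0 ▸ hpq)⟩

end PHarmoniousOp

def weightedGrad {V : Type*} (adj : V → V → Prop) (w : V → V → ℝ) (u : V → ℝ) (x : V) :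
    {y : V // adj x y} → ℝ :=
  fun y => w x y * (u y - u x)

section Graph

variable {V : Type*} {adj : V → V → Prop} {w : V → V → ℝ}

theorem eq_of_weightedGrad_eq_zero (hw : ∀ x y, adj x y → 0 < w x y) {u : V → ℝ} {x y : V}
    (hxy : adj x y) (h : weightedGrad adj w u x = 0) : u y = u x := by
  simpa [weightedGrad, (hw x y hxy).ne', sub_eq_zero] using congrFun h ⟨y, hxy⟩

theorem eq_of_adj_of_forall_toLex_le [Finite V] (hw : ∀ x y, adj x y → 0 < w x y) {x : V}
    {a b c : ℝ} {φ : ({y : V // adj x y} → ℝ) → ℝ} (ha : 0 < a) (hb : 0 < b) (hc : 0 ≤ c)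
    (hφ : Monotone φ)
    (hφc : ∀ p, c * ⨅ i, p i ≤ φ p ∧ φ p ≤ c * ⨆ i, p i) {u v : V → ℝ}
    (hu : pHarmoniousOp a b φ (weightedGrad adj w u x) = 0)
    (hv : pHarmoniousOp a b φ (weightedGrad adj w v x) = 0)
    (hmax : ∀ z, toLex (u z - v z, u z) ≤ toLex (u x - v x, u x)) {y : V} (hxy : adj x y) :
    u y = u x ∧ v y = v x := by
  have : Nonempty {y : V // adj x y} := ⟨⟨y, hxy⟩⟩
  have hmax_sub (z : V) : u z - v z ≤ u x - v x ∧ (u z - v z = u x - v x → u z ≤ u x) := by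
    rcases Prod.Lex.toLex_le_toLex.mp (hmax z) with hlt | ⟨heq, hle⟩
    · exact ⟨hlt.le, fun heq => absurd heq hlt.ne⟩
    · exact ⟨heq.le, fun _ => hle⟩
  have hgrad : weightedGrad adj w u x ≤ weightedGrad adj w v x := fun z =>
    mul_le_mul_of_nonneg_left (by linarith [(hmax_sub z).1]) (hw x z z.2).le
  have hcontact (z : {y : V // adj x y})
      (hz : weightedGrad adj w u x z = weightedGrad adj w v x z) :
      weightedGrad adj w u x z ≤ 0 := by
    have hsub : u z - u x = v z - v x := mul_left_cancel₀ (hw x z z.2).ne' hz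
    exact mul_nonpos_of_nonneg_of_nonpos (hw x z z.2).le
      (sub_nonpos.mpr ((hmax_sub z).2 (by linarith)))
  obtain ⟨hu0, hv0⟩ := eq_zero_of_le_of_pHarmoniousOp_eq_zero ha hb hc hφ hφc hgrad hu hv hcontact
  exact ⟨eq_of_weightedGrad_eq_zero hw hxy hu0, eq_of_weightedGrad_eq_zero hw hxy hv0⟩

end Graph

theorem p_harmonious_comparison_general
    {V : Type*} [Fintype V]
    (adj : V → V → Prop) (w : V → V → ℝ) (B : Set V)
    (hw : ∀ x y : V, adj x y → 0 < w x y)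
    (hconn : ∀ x : V, ∃ y ∈ B, Relation.ReflTransGen adj x y)
    (f : (x : V) → ({y : V // adj x y} → ℝ) → ℝ)
    (hell : ∀ x : V, x ∉ B → ∀ p q : {y : V // adj x y} → ℝ,
      p ≤ q → f x p ≤ f x q)
    (w0 : V → ℝ) (hw0 : ∀ x : V, x ∉ B → 0 ≤ w0 x)
    (hhom : ∀ (x : V), x ∉ B → ∀ p : {y : V // adj x y} → ℝ,
      w0 x * sInf (Set.range p) ≤ f x p ∧ f x p ≤ w0 x * sSup (Set.range p))
    (wp wm : V → ℝ)
    (hwp : ∀ x : V, x ∉ B → 0 < wp x)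
    (hwm : ∀ x : V, x ∉ B → 0 < wm x)
    (F : (V → ℝ) → V → ℝ)
    (hF : ∀ (u : V → ℝ) (x : V), x ∉ B →
      F u x = wp x * eikP adj w u x + wm x * eikM adj w u x
        + f x (fun y => w x y.1 * (u y.1 - u x)))
    (u v : V → ℝ)
    (hu : ∀ x : V, x ∉ B → F u x = 0)
    (hv : ∀ x : V, x ∉ B → F v x = 0)
    (hbd : ∀ x ∈ B, u x ≤ v x) :
    ∀ x : V, u x ≤ v x := by
  by_contra! ⟨z, hz⟩
  have : Nonempty V := ⟨z⟩
  obtain ⟨x₀, hx₀⟩ := Finite.exists_max fun x => toLex (u x - v x, u x)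
  set S := {y | u y = u x₀ ∧ v y = v x₀}
  have hS_interior : ∀ y ∈ S, y ∉ B := fun y ⟨huy, hvy⟩ hyB => by
    have := (Prod.Lex.toLex_le_toLex.mp (hx₀ z)).elim (·.le) (·.1.le)
    linarith [hbd y hyB]
  have hS_closed : ∀ y y', y ∈ S → adj y y' → y' ∈ S := fun y y' ⟨huy, hvy⟩ hyy' => by
    have hyB := hS_interior y ⟨huy, hvy⟩
    -- `eikP`, `eikM` unfold to the `⨆`, `⨅` of `pHarmoniousOp` applied to `weightedGrad`.
    have hsol (u : V → ℝ) (hu : F u y = 0) : pHarmoniousOp (wp y) (wm y) (f y)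
        (weightedGrad adj w u y) = 0 := (hF u y hyB).symm.trans hu
    obtain ⟨hu', hv'⟩ := eq_of_adj_of_forall_toLex_le hw (hwp y hyB) (hwm y hyB) (hw0 y hyB)
      (fun p q => hell y hyB p q) (hhom y hyB) (hsol u (hu y hyB)) (hsol v (hv y hyB))
      (by rw [huy, hvy]; exact hx₀) hyy'
    exact ⟨hu'.trans huy, hv'.trans hvy⟩
  obtain ⟨b, hbB, hpath⟩ := hconn x₀
  exact hS_interior b (hpath.mem_of_forall_mem_imp hS_closed ⟨rfl, rfl⟩) hbB

theorem p_harmonious_comparison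
    {V : Type*} [Fintype V]
    (adj : V → V → Prop) (w : V → V → ℝ) (B : Set V)
    (hB : B.Nonempty)
    (hne : ∀ x y : V, adj x y → x ≠ y)
    (hw : ∀ x y : V, adj x y → 0 < w x y)
    (hdeg : ∀ x : V, x ∉ B → ∃ y : V, adj x y)
    (hconn : ∀ x : V, ∃ y ∈ B, Relation.ReflTransGen adj x y)
    (f : (x : V) → ({y : V // adj x y} → ℝ) → ℝ)
    (hell : ∀ x : V, x ∉ B → ∀ p q : {y : V // adj x y} → ℝ,
      p ≤ q → f x p ≤ f x q)
    (w0 : V → ℝ) (hw0 : ∀ x : V, x ∉ B → 0 ≤ w0 x)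
    (hhom : ∀ (x : V), x ∉ B → ∀ p : {y : V // adj x y} → ℝ,
      w0 x * sInf (Set.range p) ≤ f x p ∧ f x p ≤ w0 x * sSup (Set.range p))
    (wp wm : V → ℝ)
    (hwp : ∀ x : V, x ∉ B → 0 < wp x)
    (hwm : ∀ x : V, x ∉ B → 0 < wm x)
    (F : (V → ℝ) → V → ℝ)
    (hF : ∀ (u : V → ℝ) (x : V), x ∉ B →
      F u x = wp x * eikP adj w u x + wm x * eikM adj w u x
        + f x (fun y => w x y.1 * (u y.1 - u x)))
    (u v : V → ℝ)
    (hu : ∀ x : V, x ∉ B → F u x = 0)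
    (hv : ∀ x : V, x ∉ B → F v x = 0)
    (hbd : ∀ x ∈ B, u x ≤ v x) :
    ∀ x : V, u x ≤ v x :=
  p_harmonious_comparison_general adj w B hw hconn f hell w0 hw0 hhom wp wm hwp hwm F hF u v hu hv
    hbd
end

section
/- Existence for homogeneous elliptic equations: Let G be a finite weighted directed graph with nonempty boundary ∂V. Let f(x,p), defined for interior vertices x and p ∈ ℝ^{d(x)}, be elliptic, homogeneous, and continuous in p for each fixed x, and let g : ∂V → ℝ. Then the Dirichlet problem has a solution: there exists u : V → ℝ with f(x, ∇u(x)) = 0 for every interior vertex x and u(x) = g(x) for every x ∈ ∂V; moreover u can be taken with min_{∂V} g ≤ u(x) ≤ max_{∂V} g for all x ∈ V. -/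
/-!
Perron's method. At an interior vertex `x`, with the values of `u` at the neighbours frozen, the
map `t ↦ f x (∇u(x))|_{u(x) = t}` is continuous, nonnegative at the least neighbouring value and
nonpositive at the largest one, so the largest such `t` with nonnegative value (capped by the
largest neighbouring value) is a root; by ellipticity this root is monotone in `u`. Replacing
`u(x)` by it at every interior vertex and by `g(x)` on the boundary is thus a monotone self-map of
the box `min g ≤ u ≤ max g`, and a fixed point given by Knaster–Tarski solves the problem.
-/

open Set

theorem MonotoneOn.exists_isFixedPt_of_mapsTo_Icc {α : Type*} [ConditionallyCompleteLattice α]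
    {f : α → α} {a b : α} (hf : MonotoneOn f (Icc a b)) (hab : a ≤ b)
    (hmaps : MapsTo f (Icc a b) (Icc a b)) : ∃ x ∈ Icc a b, Function.IsFixedPt f x := by
  have : Fact (a ≤ b) := ⟨hab⟩
  let F : Icc a b →o Icc a b := ⟨hmaps.restrict f _ _, fun x y h => hf x.2 y.2 h⟩
  exact ⟨F.lfp, F.lfp.2, congrArg Subtype.val F.map_lfp⟩

namespace LocalDirichlet

variable {ι : Type*} (F : (ι → ℝ) → ℝ) (a v : ι → ℝ)

/-- `∇u(x)` when `u(x) = t`, the neighbouring values are `v` and the edge weights `a`. -/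
def gradient (t : ℝ) : ι → ℝ := fun i => a i * (v i - t)

def subsolutionLevels : Set ℝ :=
  {t | 0 ≤ F (gradient a v t)} ∩ Iic (⨆ i, v i)

noncomputable def localSolution : ℝ := sSup (subsolutionLevels F a v)

variable {F a}

theorem continuous_gradient : Continuous (gradient a v) :=
  continuous_pi fun _ => continuous_const.mul (continuous_const.sub continuous_id)

theorem bddAbove_subsolutionLevels : BddAbove (subsolutionLevels F a v) :=
  ⟨⨆ i, v i, fun _ ht => ht.2⟩

theorem iInf_mem_subsolutionLevels [Finite ι] [Nonempty ι] (ha : 0 ≤ a)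
    (hF : ∀ p, 0 ≤ p → 0 ≤ F p) : (⨅ i, v i) ∈ subsolutionLevels F a v :=
  ⟨hF _ fun i => mul_nonneg (ha i) (sub_nonneg.2 (ciInf_le (Finite.bddBelow_range v) i)),
    ciInf_le_ciSup (Finite.bddBelow_range v) (Finite.bddAbove_range v)⟩

variable [Finite ι] [Nonempty ι]

theorem iInf_le_localSolution (ha : 0 ≤ a) (hF_nonneg : ∀ p, 0 ≤ p → 0 ≤ F p) :
    ⨅ i, v i ≤ localSolution F a v :=
  le_csSup (bddAbove_subsolutionLevels v) (iInf_mem_subsolutionLevels v ha hF_nonneg)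

theorem localSolution_mem_subsolutionLevels (ha : 0 ≤ a) (hF_nonneg : ∀ p, 0 ≤ p → 0 ≤ F p)
    (hF_cont : Continuous F) :
    localSolution F a v ∈ subsolutionLevels F a v :=
  ((isClosed_le continuous_const (hF_cont.comp (continuous_gradient v))).inter
    isClosed_Iic).csSup_mem ⟨_, iInf_mem_subsolutionLevels v ha hF_nonneg⟩
    (bddAbove_subsolutionLevels v)

theorem localSolution_le_iSup (ha : 0 ≤ a) (hF_nonneg : ∀ p, 0 ≤ p → 0 ≤ F p)
    (hF_cont : Continuous F) : localSolution F a v ≤ ⨆ i, v i :=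
  (localSolution_mem_subsolutionLevels v ha hF_nonneg hF_cont).2

theorem apply_gradient_localSolution (ha : 0 ≤ a) (hF_nonneg : ∀ p, 0 ≤ p → 0 ≤ F p)
    (hF_nonpos : ∀ p, p ≤ 0 → F p ≤ 0)
    (hF_cont : Continuous F) : F (gradient a v (localSolution F a v)) = 0 := by
  set s := localSolution F a v
  obtain ⟨hs_nonneg, hs_le⟩ := localSolution_mem_subsolutionLevels v ha hF_nonneg hF_cont
  have hsup_nonpos : F (gradient a v (⨆ i, v i)) ≤ 0 := hF_nonpos _ fun i =>
    mul_nonpos_of_nonneg_of_nonpos (ha i) (sub_nonpos.2 (le_ciSup (Finite.bddAbove_range v) i))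
  -- A root in `[s, ⨆ v]` is itself a subsolution level, hence equals `s`.
  obtain ⟨t, ⟨hst, ht_le⟩, ht⟩ := intermediate_value_Icc' hs_le
    (hF_cont.comp (continuous_gradient v)).continuousOn ⟨hsup_nonpos, hs_nonneg⟩
  have hts : t ≤ s := le_csSup (bddAbove_subsolutionLevels v) ⟨ht.ge, ht_le⟩
  rwa [le_antisymm hts hst] at ht

theorem localSolution_mono (ha : 0 ≤ a) (hF_nonneg : ∀ p, 0 ≤ p → 0 ≤ F p)
    (hF_mono : Monotone F) : Monotone (localSolution F a) := by
  intro v v' hvv'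
  refine csSup_le_csSup (bddAbove_subsolutionLevels v')
    ⟨_, iInf_mem_subsolutionLevels v ha hF_nonneg⟩ ?_
  rintro t ⟨ht, ht_le⟩
  exact ⟨ht.trans (hF_mono fun i => mul_le_mul_of_nonneg_left (by linarith [hvv' i]) (ha i)),
    ht_le.trans (ciSup_mono (Finite.bddAbove_range v') hvv')⟩

end LocalDirichlet

section Homogeneous

variable {ι : Type*} {F : (ι → ℝ) → ℝ} {c : ℝ} {p : ι → ℝ}

theorem nonneg_of_le_mul_sInf (hc : 0 ≤ c) (hF : ∀ p, c * sInf (range p) ≤ F p)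
    (hp : 0 ≤ p) : 0 ≤ F p :=
  (mul_nonneg hc (Real.sInf_nonneg (forall_mem_range.2 hp))).trans (hF p)

theorem nonpos_of_le_mul_sSup (hc : 0 ≤ c) (hF : ∀ p, F p ≤ c * sSup (range p))
    (hp : p ≤ 0) : F p ≤ 0 :=
  (hF p).trans (mul_nonpos_of_nonneg_of_nonpos hc (Real.sSup_nonpos (forall_mem_range.2 hp)))

end Homogeneous

section DirichletUpdate

open LocalDirichlet

variable {V : Type*} {adj : V → V → Prop} {w : V → V → ℝ} {B : Set V}
  {f : (x : V) → ({y : V // adj x y} → ℝ) → ℝ} {g : V → ℝ}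

variable (adj w B f g) in
open Classical in
noncomputable def dirichletUpdate (u : V → ℝ) (x : V) : ℝ :=
  if x ∈ B then g x else localSolution (f x) (fun y => w x y.1) (fun y => u y.1)

theorem dirichletUpdate_of_mem (u : V → ℝ) {x : V} (hx : x ∈ B) :
    dirichletUpdate adj w B f g u x = g x := by
  simp [dirichletUpdate, hx]

theorem dirichletUpdate_of_notMem (u : V → ℝ) {x : V} (hx : x ∉ B) :
    dirichletUpdate adj w B f g u x =
      localSolution (f x) (fun y => w x y.1) (fun y => u y.1) := by
  simp [dirichletUpdate, hx]

variable [Finite V]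

theorem monotone_dirichletUpdate (hw : ∀ x y, adj x y → 0 ≤ w x y)
    (hdeg : ∀ x, x ∉ B → Nonempty {y // adj x y})
    (hf_nonneg : ∀ x, x ∉ B → ∀ p, 0 ≤ p → 0 ≤ f x p)
    (hell : ∀ x, x ∉ B → Monotone (f x)) : Monotone (dirichletUpdate adj w B f g) := by
  intro u v huv x
  by_cases hx : x ∈ B
  · simp only [dirichletUpdate_of_mem _ hx, le_refl]
  · have := hdeg x hx
    simp only [dirichletUpdate_of_notMem _ hx]
    exact localSolution_mono (fun y => hw x y.1 y.2) (hf_nonneg x hx) (hell x hx)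
      fun y => huv y.1

theorem mapsTo_dirichletUpdate (hw : ∀ x y, adj x y → 0 ≤ w x y)
    (hdeg : ∀ x, x ∉ B → Nonempty {y // adj x y})
    (hf_nonneg : ∀ x, x ∉ B → ∀ p, 0 ≤ p → 0 ≤ f x p)
    (hcont : ∀ x, x ∉ B → Continuous (f x)) {m M : ℝ} (hm : ∀ x ∈ B, m ≤ g x)
    (hM : ∀ x ∈ B, g x ≤ M) :
    MapsTo (dirichletUpdate adj w B f g) (Icc (fun _ => m) fun _ => M)
      (Icc (fun _ => m) fun _ => M) := by
  intro u hu
  suffices ∀ x, m ≤ dirichletUpdate adj w B f g u x ∧ dirichletUpdate adj w B f g u x ≤ M from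
    ⟨fun x => (this x).1, fun x => (this x).2⟩
  intro x
  by_cases hx : x ∈ B
  · simp only [dirichletUpdate_of_mem _ hx]
    exact ⟨hm x hx, hM x hx⟩
  · have := hdeg x hx
    simp only [dirichletUpdate_of_notMem _ hx]
    have ha : (0 : {y // adj x y} → ℝ) ≤ fun y => w x y.1 := fun y => hw x y.1 y.2
    exact ⟨(le_ciInf fun y : {y // adj x y} => hu.1 y.1).trans
        (iInf_le_localSolution _ ha (hf_nonneg x hx)),
      (localSolution_le_iSup _ ha (hf_nonneg x hx) (hcont x hx)).trans
        (ciSup_le fun y => hu.2 y.1)⟩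

theorem apply_gradient_eq_zero_of_isFixedPt (hw : ∀ x y, adj x y → 0 ≤ w x y)
    (hdeg : ∀ x, x ∉ B → Nonempty {y // adj x y})
    (hf_nonneg : ∀ x, x ∉ B → ∀ p, 0 ≤ p → 0 ≤ f x p)
    (hf_nonpos : ∀ x, x ∉ B → ∀ p, p ≤ 0 → f x p ≤ 0) (hcont : ∀ x, x ∉ B → Continuous (f x))
    {u : V → ℝ} (hu : Function.IsFixedPt (dirichletUpdate adj w B f g) u) {x : V} (hx : x ∉ B) :
    f x (fun y => w x y.1 * (u y.1 - u x)) = 0 := by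
  have := hdeg x hx
  have hux : u x = localSolution (f x) (fun y => w x y.1) (fun y => u y.1) := by
    rw [← dirichletUpdate_of_notMem u hx, hu]
  rw [hux]
  exact apply_gradient_localSolution _ (fun y => hw x y.1 y.2) (hf_nonneg x hx) (hf_nonpos x hx)
    (hcont x hx)

end DirichletUpdate

theorem existence_homogeneous_elliptic_general
    {V : Type*} [Fintype V]
    (adj : V → V → Prop) (w : V → V → ℝ) (B : Set V)
    (hw : ∀ x y : V, adj x y → 0 < w x y)
    (hdeg : ∀ x : V, x ∉ B → ∃ y : V, adj x y)
    (f : (x : V) → ({y : V // adj x y} → ℝ) → ℝ)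
    (hell : ∀ x : V, x ∉ B → ∀ p q : {y : V // adj x y} → ℝ,
      p ≤ q → f x p ≤ f x q)
    (w0 : V → ℝ) (hw0 : ∀ x : V, x ∉ B → 0 ≤ w0 x)
    (hhom : ∀ (x : V), x ∉ B → ∀ p : {y : V // adj x y} → ℝ,
      w0 x * sInf (Set.range p) ≤ f x p ∧ f x p ≤ w0 x * sSup (Set.range p))
    (hcont : ∀ x : V, x ∉ B → Continuous (f x))
    (g : V → ℝ) :
    ∃ u : V → ℝ,
      (∀ x : V, x ∉ B → f x (fun y => w x y.1 * (u y.1 - u x)) = 0) ∧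
      (∀ x ∈ B, u x = g x) ∧
      (∀ x : V, sInf (g '' B) ≤ u x ∧ u x ≤ sSup (g '' B)) := by
  have hw' : ∀ x y, adj x y → 0 ≤ w x y := fun x y hxy => (hw x y hxy).le
  have hdeg' : ∀ x, x ∉ B → Nonempty {y // adj x y} := fun x hx =>
    nonempty_subtype.2 (hdeg x hx)
  have hf_nonneg : ∀ x, x ∉ B → ∀ p, 0 ≤ p → 0 ≤ f x p := fun x hx _ =>
    nonneg_of_le_mul_sInf (hw0 x hx) fun p => (hhom x hx p).1
  have hf_nonpos : ∀ x, x ∉ B → ∀ p, p ≤ 0 → f x p ≤ 0 := fun x hx _ =>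
    nonpos_of_le_mul_sSup (hw0 x hx) fun p => (hhom x hx p).2
  have hgB : (g '' B).Finite := B.toFinite.image g
  have hmono := monotone_dirichletUpdate (g := g) hw' hdeg' hf_nonneg hell
  obtain ⟨u, hu_box, hu_fix⟩ := (hmono.monotoneOn _).exists_isFixedPt_of_mapsTo_Icc
      (fun _ => Real.sInf_le_sSup _ hgB.bddBelow hgB.bddAbove)
      (mapsTo_dirichletUpdate hw' hdeg' hf_nonneg hcont
        (fun x hx => csInf_le hgB.bddBelow (mem_image_of_mem g hx))
        (fun x hx => le_csSup hgB.bddAbove (mem_image_of_mem g hx)))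
  refine ⟨u, fun x hx => apply_gradient_eq_zero_of_isFixedPt hw' hdeg' hf_nonneg hf_nonpos hcont
    hu_fix hx, fun x hx => ?_, fun x => ⟨hu_box.1 x, hu_box.2 x⟩⟩
  rw [← hu_fix]
  exact dirichletUpdate_of_mem u hx

theorem existence_homogeneous_elliptic
    {V : Type*} [Fintype V]
    (adj : V → V → Prop) (w : V → V → ℝ) (B : Set V)
    (hB : B.Nonempty)
    (hne : ∀ x y : V, adj x y → x ≠ y)
    (hw : ∀ x y : V, adj x y → 0 < w x y)
    (hdeg : ∀ x : V, x ∉ B → ∃ y : V, adj x y)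
    (f : (x : V) → ({y : V // adj x y} → ℝ) → ℝ)
    (hell : ∀ x : V, x ∉ B → ∀ p q : {y : V // adj x y} → ℝ,
      p ≤ q → f x p ≤ f x q)
    (w0 : V → ℝ) (hw0 : ∀ x : V, x ∉ B → 0 ≤ w0 x)
    (hhom : ∀ (x : V), x ∉ B → ∀ p : {y : V // adj x y} → ℝ,
      w0 x * sInf (Set.range p) ≤ f x p ∧ f x p ≤ w0 x * sSup (Set.range p))
    (hcont : ∀ x : V, x ∉ B → Continuous (f x))
    (g : V → ℝ) :
    ∃ u : V → ℝ,
      (∀ x : V, x ∉ B → f x (fun y => w x y.1 * (u y.1 - u x)) = 0) ∧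
      (∀ x ∈ B, u x = g x) ∧
      (∀ x : V, sInf (g '' B) ≤ u x ∧ u x ≤ sSup (g '' B)) :=
  existence_homogeneous_elliptic_general adj w B hw hdeg f hell w0 hw0 hhom hcont g
end

section
/- Existence for eikonal equations: Let G be a finite weighted directed graph with nonempty boundary ∂V which is connected to the boundary, let h be a strictly positive function on the interior vertices, and let g : ∂V → ℝ. Then there exists u : V → ℝ with ‖∇u(x)‖⁺ = h(x) for every interior vertex x and u(x) = g(x) for every x ∈ ∂V. -/
theorem eikP_eq_of_bellman {V : Type*} {adj : V → V → Prop} {w : V → V → ℝ} {u : V → ℝ}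
    {x : V} {a : ℝ} (hw : ∀ y, adj x y → 0 < w x y)
    (hle : ∀ y, adj x y → u y - a / w x y ≤ u x)
    (hex : ∃ y, adj x y ∧ u x = u y - a / w x y) :
    eikP adj w u x = a := by
  obtain ⟨y, hxy, hy⟩ := hex
  refine IsGreatest.csSup_eq ⟨⟨⟨y, hxy⟩, ?_⟩, ?_⟩
  · simp only [hy, sub_sub_cancel]
    exact mul_div_cancel₀ a (hw y hxy).ne'
  · rintro _ ⟨⟨z, hxz⟩, rfl⟩
    rw [← le_div_iff₀' (hw z hxz)]
    linarith [hle z hxz]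

/-- `IsPathValue adj B c g x t`: some directed path from `x`, stopped at its first boundary vertex
`b`, has `g b` minus the sum of its edge costs `c` equal to `t`. -/
inductive IsPathValue {V : Type*} (adj : V → V → Prop) (B : Set V) (c : V → V → ℝ)
    (g : V → ℝ) : V → ℝ → Prop
  | boundary {x : V} (hx : x ∈ B) : IsPathValue adj B c g x (g x)
  | step {x y : V} {t : ℝ} (hx : x ∉ B) (hxy : adj x y) (ht : IsPathValue adj B c g y t) :
      IsPathValue adj B c g x (t - c x y)

noncomputable def maxPathValue {V : Type*} (adj : V → V → Prop) (B : Set V) (c : V → V → ℝ)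
    (g : V → ℝ) (x : V) : ℝ :=
  sSup {t | IsPathValue adj B c g x t}

namespace IsPathValue

variable {V : Type*} {adj : V → V → Prop} {B : Set V} {c : V → V → ℝ} {g : V → ℝ} {x : V}
  {t : ℝ}

theorem eq_of_mem (hx : x ∈ B) (ht : IsPathValue adj B c g x t) : t = g x := by
  cases ht with
  | boundary => rfl
  | step hx' => exact absurd hx hx'

theorem exists_step_of_notMem (hx : x ∉ B) (ht : IsPathValue adj B c g x t) :
    ∃ y s, adj x y ∧ IsPathValue adj B c g y s ∧ t = s - c x y := by
  cases ht with
  | boundary hx' => exact absurd hx' hx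
  | step _ hxy hs => exact ⟨_, _, hxy, hs, rfl⟩

theorem le_of_cost_nonneg {M : ℝ} (hc : ∀ x y, x ∉ B → adj x y → 0 ≤ c x y)
    (hM : ∀ b ∈ B, g b ≤ M) (ht : IsPathValue adj B c g x t) : t ≤ M := by
  induction ht with
  | boundary hx => exact hM _ hx
  | step hx hxy _ ih => linarith [hc _ _ hx hxy]

theorem exists_of_reflTransGen {b : V} (hb : b ∈ B) (hxb : Relation.ReflTransGen adj x b) :
    ∃ t, IsPathValue adj B c g x t := by
  induction hxb using Relation.ReflTransGen.head_induction_on with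
  | refl => exact ⟨_, boundary hb⟩
  | @head x y hxy _ ih =>
    by_cases hx : x ∈ B
    · exact ⟨_, boundary hx⟩
    · obtain ⟨t, ht⟩ := ih
      exact ⟨_, step hx hxy ht⟩

end IsPathValue

namespace maxPathValue

open IsPathValue

variable {V : Type*} {adj : V → V → Prop} {B : Set V} {c : V → V → ℝ} {g : V → ℝ} {x y : V}

theorem eq_of_mem (hx : x ∈ B) : maxPathValue adj B c g x = g x := by
  have hset : {t | IsPathValue adj B c g x t} = {g x} :=
    Set.eq_singleton_iff_unique_mem.2 ⟨boundary hx, fun _ ht => ht.eq_of_mem hx⟩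
  rw [maxPathValue, hset, csSup_singleton]

theorem bddAbove_pathValues [Finite V] (hc : ∀ x y, x ∉ B → adj x y → 0 ≤ c x y) (x : V) :
    BddAbove {t | IsPathValue adj B c g x t} := by
  obtain ⟨M, hM⟩ := Finite.exists_le g
  exact ⟨M, fun _ ht => ht.le_of_cost_nonneg hc fun b _ => hM b⟩

theorem pathValues_nonempty (hconn : ∀ x, ∃ b ∈ B, Relation.ReflTransGen adj x b) (x : V) :
    {t | IsPathValue adj B c g x t}.Nonempty := by
  obtain ⟨b, hb, hxb⟩ := hconn x
  exact exists_of_reflTransGen hb hxb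

theorem sub_cost_le [Finite V] (hc : ∀ x y, x ∉ B → adj x y → 0 ≤ c x y)
    (hconn : ∀ x, ∃ b ∈ B, Relation.ReflTransGen adj x b) (hx : x ∉ B) (hxy : adj x y) :
    maxPathValue adj B c g y - c x y ≤ maxPathValue adj B c g x := by
  rw [sub_le_iff_le_add]
  refine csSup_le (pathValues_nonempty hconn y) fun t ht => ?_
  rw [← sub_le_iff_le_add]
  exact le_csSup (bddAbove_pathValues hc x) (step hx hxy ht)

theorem exists_eq_sub_cost [Finite V] (hc : ∀ x y, x ∉ B → adj x y → 0 ≤ c x y)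
    (hconn : ∀ x, ∃ b ∈ B, Relation.ReflTransGen adj x b) (hx : x ∉ B) :
    ∃ y, adj x y ∧ maxPathValue adj B c g x = maxPathValue adj B c g y - c x y := by
  have hnbr : {y | adj x y}.Nonempty := by
    obtain ⟨t, ht⟩ := pathValues_nonempty (c := c) (g := g) hconn x
    obtain ⟨y, -, hxy, -⟩ := ht.exists_step_of_notMem hx
    exact ⟨y, hxy⟩
  obtain ⟨y, hxy, hmax⟩ := Set.exists_max_image _
    (fun y => maxPathValue adj B c g y - c x y) (Set.toFinite _) hnbr
  refine ⟨y, hxy, le_antisymm ?_ (sub_cost_le hc hconn hx hxy)⟩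
  refine csSup_le (pathValues_nonempty hconn x) fun t ht => ?_
  obtain ⟨z, s, hxz, hs, rfl⟩ := ht.exists_step_of_notMem hx
  calc s - c x z ≤ maxPathValue adj B c g z - c x z :=
        sub_le_sub_right (le_csSup (bddAbove_pathValues hc z) hs) _
    _ ≤ maxPathValue adj B c g y - c x y := hmax z hxz

end maxPathValue

theorem existence_eikonal_general
    {V : Type*} [Fintype V]
    (adj : V → V → Prop) (w : V → V → ℝ) (B : Set V)
    (hw : ∀ x y : V, adj x y → 0 < w x y)
    (hconn : ∀ x : V, ∃ y ∈ B, Relation.ReflTransGen adj x y)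
    (h : V → ℝ) (hh : ∀ x : V, x ∉ B → 0 < h x)
    (g : V → ℝ) :
    ∃ u : V → ℝ,
      (∀ x : V, x ∉ B → eikP adj w u x = h x) ∧
      (∀ x ∈ B, u x = g x) := by
  set c : V → V → ℝ := fun x y => h x / w x y
  have hc : ∀ x y, x ∉ B → adj x y → 0 ≤ c x y := fun x y hx hxy =>
    (div_pos (hh x hx) (hw x y hxy)).le
  refine ⟨maxPathValue adj B c g, fun x hx => ?_, fun x hx => maxPathValue.eq_of_mem hx⟩
  exact eikP_eq_of_bellman (hw x) (fun y hxy => maxPathValue.sub_cost_le hc hconn hx hxy)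
    (maxPathValue.exists_eq_sub_cost hc hconn hx)

theorem existence_eikonal
    {V : Type*} [Fintype V]
    (adj : V → V → Prop) (w : V → V → ℝ) (B : Set V)
    (hB : B.Nonempty)
    (hne : ∀ x y : V, adj x y → x ≠ y)
    (hw : ∀ x y : V, adj x y → 0 < w x y)
    (hdeg : ∀ x : V, x ∉ B → ∃ y : V, adj x y)
    (hconn : ∀ x : V, ∃ y ∈ B, Relation.ReflTransGen adj x y)
    (h : V → ℝ) (hh : ∀ x : V, x ∉ B → 0 < h x)
    (g : V → ℝ) :
    ∃ u : V → ℝ,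
      (∀ x : V, x ∉ B → eikP adj w u x = h x) ∧
      (∀ x ∈ B, u x = g x) :=
  existence_eikonal_general adj w B hw hconn h hh g
end

section
/- The distance function solves the eikonal equation: Let G be a finite weighted directed graph with nonempty boundary ∂V which is connected to the boundary, and define u(x) = min_{y ∈ ∂V} d(x,y), the (positive) distance to the boundary. Then u(x) = 0 for every x ∈ ∂V and ‖∇u(x)‖⁻ + 1 = 0 for every interior vertex x; moreover, the negative distance function −u satisfies −u(x) = 0 on ∂V and ‖∇(−u)(x)‖⁺ − 1 = 0 for every interior vertex x. -/
/-- The cost (length) of a path, where each step from `a` to `b` costs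
`1 / w a b` (the directed distance between neighbors). -/
noncomputable def pathCost {V : Type*} (w : V → V → ℝ) : List V → ℝ
  | [] => 0
  | [_] => 0
  | a :: b :: rest => 1 / w a b + pathCost w (b :: rest)

/-- The distance from `x` to the boundary set `B`: the infimum of costs of
directed paths (chains for `adj`) starting at `x` and ending in `B`;
this equals `min_{y ∈ B} d(x, y)`. -/
noncomputable def distToBdry {V : Type*} (adj : V → V → Prop)
    (w : V → V → ℝ) (B : Set V) (x : V) : ℝ :=
  sInf {c : ℝ | ∃ l : List V, l.Chain' adj ∧ l.head? = some x ∧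
    (∃ y ∈ B, l.getLast? = some y) ∧ c = pathCost w l}

section Eikonal

variable {V : Type*} {adj : V → V → Prop} {w : V → V → ℝ}

theorem eikP_neg (u : V → ℝ) (x : V) :
    eikP adj w (fun z => -u z) x = -eikM adj w u x := by
  rw [eikP, eikM, ← Real.sSup_neg, Set.neg_range]
  congr 2 with y
  ring

theorem eikM_eq_neg_one {u : V → ℝ} {x y₀ : V} (hw : ∀ y, adj x y → 0 < w x y)
    (hle : ∀ y, adj x y → u x ≤ 1 / w x y + u y) (hy₀ : adj x y₀)
    (heq : u x = 1 / w x y₀ + u y₀) : eikM adj w u x = -1 := by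
  refine IsLeast.csInf_eq ⟨⟨⟨y₀, hy₀⟩, ?_⟩, ?_⟩
  · have hwy₀ := hw y₀ hy₀
    rw [heq]
    field_simp
    ring
  · rintro _ ⟨⟨y, hy⟩, rfl⟩
    have hwy := hw y hy
    calc -1 = w x y * -(1 / w x y) := by field_simp
      _ ≤ w x y * (u y - u x) := by gcongr; linarith [hle y hy]

end Eikonal

section DistToBdry

variable {V : Type*} {adj : V → V → Prop} {w : V → V → ℝ} {B : Set V}

/-- `distToBdry adj w B x` is definitionally `sInf (bdryPathCosts adj w B x)`. -/
def bdryPathCosts (adj : V → V → Prop) (w : V → V → ℝ) (B : Set V) (x : V) : Set ℝ :=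
  {c : ℝ | ∃ l : List V, l.IsChain adj ∧ l.head? = some x ∧
    (∃ y ∈ B, l.getLast? = some y) ∧ c = pathCost w l}

theorem pathCost_nonneg (hw : ∀ x y : V, adj x y → 0 < w x y) :
    ∀ l : List V, l.IsChain adj → 0 ≤ pathCost w l
  | [], _ | [_], _ => le_rfl
  | a :: b :: rest, h => by
      rw [List.isChain_cons_cons] at h
      have := hw a b h.1
      have := pathCost_nonneg hw (b :: rest) h.2
      simp only [pathCost]
      positivity

theorem nonneg_of_mem_bdryPathCosts (hw : ∀ x y : V, adj x y → 0 < w x y) {x : V} {c : ℝ}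
    (hc : c ∈ bdryPathCosts adj w B x) : 0 ≤ c := by
  obtain ⟨l, hl, -, -, rfl⟩ := hc
  exact pathCost_nonneg hw l hl

theorem bdryPathCosts_bddBelow (hw : ∀ x y : V, adj x y → 0 < w x y) (x : V) :
    BddBelow (bdryPathCosts adj w B x) :=
  ⟨0, fun _ => nonneg_of_mem_bdryPathCosts hw⟩

theorem bdryPathCosts_nonempty {x y : V} (hy : y ∈ B) (hxy : Relation.ReflTransGen adj x y) :
    (bdryPathCosts adj w B x).Nonempty := by
  obtain ⟨l, hl, hlast⟩ := List.exists_isChain_cons_of_relationReflTransGen hxy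
  refine ⟨_, x :: l, hl, rfl, ⟨y, hy, ?_⟩, rfl⟩
  rw [List.getLast?_eq_some_getLast (List.cons_ne_nil x l), hlast]

theorem zero_mem_bdryPathCosts {x : V} (hx : x ∈ B) : (0 : ℝ) ∈ bdryPathCosts adj w B x :=
  ⟨[x], List.isChain_singleton x, rfl, ⟨x, hx, rfl⟩, rfl⟩

theorem one_div_add_mem_bdryPathCosts {x y : V} (hxy : adj x y) {c : ℝ}
    (hc : c ∈ bdryPathCosts adj w B y) : 1 / w x y + c ∈ bdryPathCosts adj w B x := by
  obtain ⟨_ | ⟨b, rest⟩, hl, hhead, ⟨z, hz, hlast⟩, rfl⟩ := hc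
  · simp at hhead
  obtain rfl : b = y := by simpa using hhead
  refine ⟨x :: b :: rest, ?_, rfl, ⟨z, hz, ?_⟩, rfl⟩
  · exact List.IsChain.cons_cons hxy hl
  · rwa [List.getLast?_cons_cons]

theorem exists_adj_of_mem_bdryPathCosts {x : V} (hx : x ∉ B) {c : ℝ}
    (hc : c ∈ bdryPathCosts adj w B x) :
    ∃ y, adj x y ∧ ∃ c' ∈ bdryPathCosts adj w B y, c = 1 / w x y + c' := by
  obtain ⟨l, hl, hhead, ⟨z, hz, hlast⟩, rfl⟩ := hc
  match l, hhead with
  | [a], hhead =>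
    obtain rfl : a = x := by simpa using hhead
    obtain rfl : a = z := by simpa using hlast
    exact absurd hz hx
  | a :: b :: rest, hhead =>
    obtain rfl : a = x := by simpa using hhead
    rw [List.isChain_cons_cons] at hl
    rw [List.getLast?_cons_cons] at hlast
    exact ⟨b, hl.1, _, ⟨b :: rest, hl.2, rfl, ⟨z, hz, hlast⟩, rfl⟩, rfl⟩

theorem distToBdry_eq_zero (hw : ∀ x y : V, adj x y → 0 < w x y) {x : V} (hx : x ∈ B) :
    distToBdry adj w B x = 0 :=
  le_antisymm (csInf_le (bdryPathCosts_bddBelow hw x) (zero_mem_bdryPathCosts hx))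
    (le_csInf ⟨0, zero_mem_bdryPathCosts hx⟩ fun _ => nonneg_of_mem_bdryPathCosts hw)

theorem distToBdry_le_one_div_add (hw : ∀ x y : V, adj x y → 0 < w x y) {x y : V}
    (hy : (bdryPathCosts adj w B y).Nonempty) (hxy : adj x y) :
    distToBdry adj w B x ≤ 1 / w x y + distToBdry adj w B y := by
  suffices distToBdry adj w B x - 1 / w x y ≤ distToBdry adj w B y by linarith
  refine le_csInf hy fun c hc => sub_le_iff_le_add'.2 ?_
  exact csInf_le (bdryPathCosts_bddBelow hw x) (one_div_add_mem_bdryPathCosts hxy hc)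

theorem exists_adj_distToBdry_eq [Finite V] (hw : ∀ x y : V, adj x y → 0 < w x y)
    (hne : ∀ y, (bdryPathCosts adj w B y).Nonempty) {x : V} (hx : x ∉ B) :
    ∃ y, adj x y ∧ distToBdry adj w B x = 1 / w x y + distToBdry adj w B y := by
  obtain ⟨y₁, hy₁, -⟩ := exists_adj_of_mem_bdryPathCosts hx (hne x).some_mem
  have : Nonempty {y // adj x y} := ⟨⟨y₁, hy₁⟩⟩
  obtain ⟨⟨y₀, hy₀⟩, hmin⟩ :=
    Finite.exists_min fun y : {y // adj x y} => 1 / w x y + distToBdry adj w B y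
  refine ⟨y₀, hy₀, le_antisymm (distToBdry_le_one_div_add hw (hne y₀) hy₀) ?_⟩
  refine le_csInf (hne x) fun c hc => ?_
  obtain ⟨y, hy, c', hc', rfl⟩ := exists_adj_of_mem_bdryPathCosts hx hc
  calc 1 / w x y₀ + distToBdry adj w B y₀ ≤ 1 / w x y + distToBdry adj w B y := hmin ⟨y, hy⟩
    _ ≤ 1 / w x y + c' := add_le_add_right (csInf_le (bdryPathCosts_bddBelow hw y) hc') _

end DistToBdry

theorem distance_solves_eikonal_general
    {V : Type*} [Fintype V]
    (adj : V → V → Prop) (w : V → V → ℝ) (B : Set V)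
    (hw : ∀ x y : V, adj x y → 0 < w x y)
    (hconn : ∀ x : V, ∃ y ∈ B, Relation.ReflTransGen adj x y) :
    (∀ x ∈ B, distToBdry adj w B x = 0) ∧
    (∀ x : V, x ∉ B → eikM adj w (distToBdry adj w B) x + 1 = 0) ∧
    (∀ x ∈ B, -(distToBdry adj w B x) = 0) ∧
    (∀ x : V, x ∉ B →
      eikP adj w (fun z => -(distToBdry adj w B z)) x - 1 = 0) := by
  have hne (x : V) : (bdryPathCosts adj w B x).Nonempty :=
    let ⟨_, hy, hxy⟩ := hconn x
    bdryPathCosts_nonempty hy hxy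
  have heikM (x : V) (hx : x ∉ B) : eikM adj w (distToBdry adj w B) x = -1 := by
    obtain ⟨y₀, hy₀, heq⟩ := exists_adj_distToBdry_eq hw hne hx
    exact eikM_eq_neg_one (hw x) (fun y => distToBdry_le_one_div_add hw (hne y)) hy₀ heq
  refine ⟨fun x hx => distToBdry_eq_zero hw hx, fun x hx => ?_,
    fun x hx => by rw [distToBdry_eq_zero hw hx, neg_zero], fun x hx => ?_⟩
  · rw [heikM x hx]; norm_num
  · rw [eikP_neg, heikM x hx]; norm_num

theorem distance_solves_eikonal
    {V : Type*} [Fintype V]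
    (adj : V → V → Prop) (w : V → V → ℝ) (B : Set V)
    (hB : B.Nonempty)
    (hne : ∀ x y : V, adj x y → x ≠ y)
    (hw : ∀ x y : V, adj x y → 0 < w x y)
    (hdeg : ∀ x : V, x ∉ B → ∃ y : V, adj x y)
    (hconn : ∀ x : V, ∃ y ∈ B, Relation.ReflTransGen adj x y) :
    (∀ x ∈ B, distToBdry adj w B x = 0) ∧
    (∀ x : V, x ∉ B → eikM adj w (distToBdry adj w B) x + 1 = 0) ∧
    (∀ x ∈ B, -(distToBdry adj w B x) = 0) ∧
    (∀ x : V, x ∉ B →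
      eikP adj w (fun z => -(distToBdry adj w B z)) x - 1 = 0) :=
  distance_solves_eikonal_general adj w B hw hconn
end

section
/- Failure of uniqueness for the graph 1-Laplacian: Let G be the graph with vertex set V = {(i,j) : i,j ∈ {−2,−1,1,2}, |i|+|j| ≤ 3} (twelve vertices), boundary ∂V = {(i,j) ∈ V : |i|+|j| = 3}, all weights equal to 1, where each of the four interior vertices (i,j) with i,j ∈ {−1,1} has the four neighbors (2i, j), (−i, j), (i, 2j), (i, −j) (edges in both directions). Define boundary data g by g(1,2) = g(−1,2) = g(−1,−2) = g(1,−2) = −1 and g(2,1) = g(2,−1) = g(−2,1) = g(−2,−1) = 1. Then the function u equal to 1 at all four interior vertices and to g on ∂V, and the function v equal to −1 at all four interior vertices and to g on ∂V, both satisfy Δ₁u(x) = 0 at every interior vertex x; hence the Dirichlet problem Δ₁u = 0 with boundary data g has two distinct solutions. -/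
/-!
At each interior vertex the two interior neighbours contribute the gradient `0`, the horizontal
boundary neighbour carries the value `1` and the vertical one the value `-1`. An interior value
`c = ±1` therefore agrees with one of the two boundary neighbours as well, so three of the four
gradient components vanish and so does their median, whichever sign `c` has.
-/

/-- Removing the largest and the smallest of the four leaves the two middle values. -/
noncomputable def median4 (a b c d : ℝ) : ℝ :=
  (a + b + c + d - max (max a b) (max c d) - min (min a b) (min c d)) / 2

theorem median4_eq_zero_of_eq_zero_or_eq_zero {a c : ℝ} (h : a = 0 ∨ c = 0) :
    median4 a 0 c 0 = 0 := by
  rcases h with rfl | rfl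
  · rcases le_total c 0 with hc | hc <;> simp [median4, hc]
  · rcases le_total a 0 with ha | ha <;> simp [median4, ha]

theorem natAbs_two_mul_add_natAbs_eq_three {i j : ℤ} (hi : i = 1 ∨ i = -1) (hj : j = 1 ∨ j = -1) :
    (2 * i).natAbs + j.natAbs = 3 := by
  rcases hi with rfl | rfl <;> rcases hj with rfl | rfl <;> rfl

theorem median4_gradient_eq_zero_of_interior_eq_sign (g w : ℤ × ℤ → ℝ) {c : ℝ}
    (hc : c = 1 ∨ c = -1)
    (hg_horiz : ∀ i j : ℤ, (i = 1 ∨ i = -1) → (j = 1 ∨ j = -1) → g (2 * i, j) = 1)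
    (hg_vert : ∀ i j : ℤ, (i = 1 ∨ i = -1) → (j = 1 ∨ j = -1) → g (i, 2 * j) = -1)
    (hw_int : ∀ i j : ℤ, (i = 1 ∨ i = -1) → (j = 1 ∨ j = -1) → w (i, j) = c)
    (hw_bd : ∀ i j : ℤ, i.natAbs + j.natAbs = 3 → w (i, j) = g (i, j))
    {i j : ℤ} (hi : i = 1 ∨ i = -1) (hj : j = 1 ∨ j = -1) :
    median4 (1 * (w (2*i, j) - w (i, j))) (1 * (w (-i, j) - w (i, j)))
            (1 * (w (i, 2*j) - w (i, j))) (1 * (w (i, -j) - w (i, j))) = 0 := by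
  have hi' : -i = 1 ∨ -i = -1 := by omega
  have hj' : -j = 1 ∨ -j = -1 := by omega
  rw [hw_bd (2 * i) j (natAbs_two_mul_add_natAbs_eq_three hi hj),
    hw_bd i (2 * j) (by rw [add_comm]; exact natAbs_two_mul_add_natAbs_eq_three hj hi),
    hg_horiz i j hi hj, hg_vert i j hi hj, hw_int i j hi hj, hw_int (-i) j hi' hj,
    hw_int i (-j) hi hj', sub_self, mul_zero, one_mul, one_mul]
  apply median4_eq_zero_of_eq_zero_or_eq_zero
  rcases hc with rfl | rfl <;> norm_num

theorem one_laplacian_nonuniqueness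
    (g u v : ℤ × ℤ → ℝ)
    (hg1 : g (1, 2) = -1) (hg2 : g (-1, 2) = -1)
    (hg3 : g (-1, -2) = -1) (hg4 : g (1, -2) = -1)
    (hg5 : g (2, 1) = 1) (hg6 : g (2, -1) = 1)
    (hg7 : g (-2, 1) = 1) (hg8 : g (-2, -1) = 1)
    (hu_int : ∀ i j : ℤ, (i = 1 ∨ i = -1) → (j = 1 ∨ j = -1) → u (i, j) = 1)
    (hu_bd : ∀ i j : ℤ, i.natAbs + j.natAbs = 3 → u (i, j) = g (i, j))
    (hv_int : ∀ i j : ℤ, (i = 1 ∨ i = -1) → (j = 1 ∨ j = -1) → v (i, j) = -1)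
    (hv_bd : ∀ i j : ℤ, i.natAbs + j.natAbs = 3 → v (i, j) = g (i, j)) :
    (∀ i j : ℤ, (i = 1 ∨ i = -1) → (j = 1 ∨ j = -1) →
      median4 (1 * (u (2*i, j) - u (i, j))) (1 * (u (-i, j) - u (i, j)))
              (1 * (u (i, 2*j) - u (i, j))) (1 * (u (i, -j) - u (i, j))) = 0) ∧
    (∀ i j : ℤ, (i = 1 ∨ i = -1) → (j = 1 ∨ j = -1) →
      median4 (1 * (v (2*i, j) - v (i, j))) (1 * (v (-i, j) - v (i, j)))
              (1 * (v (i, 2*j) - v (i, j))) (1 * (v (i, -j) - v (i, j))) = 0) ∧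
    u ≠ v := by
  have hg_horiz : ∀ i j : ℤ, (i = 1 ∨ i = -1) → (j = 1 ∨ j = -1) → g (2 * i, j) = 1 := by
    rintro i j (rfl | rfl) (rfl | rfl) <;> assumption
  have hg_vert : ∀ i j : ℤ, (i = 1 ∨ i = -1) → (j = 1 ∨ j = -1) → g (i, 2 * j) = -1 := by
    rintro i j (rfl | rfl) (rfl | rfl) <;> assumption
  refine ⟨fun _ _ ↦ median4_gradient_eq_zero_of_interior_eq_sign g u (.inl rfl)
      hg_horiz hg_vert hu_int hu_bd,
    fun _ _ ↦ median4_gradient_eq_zero_of_interior_eq_sign g v (.inr rfl)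
      hg_horiz hg_vert hv_int hv_bd,
    fun huv ↦ ?_⟩
  have h11 := congrFun huv (1, 1)
  rw [hu_int 1 1 (.inl rfl) (.inl rfl), hv_int 1 1 (.inl rfl) (.inl rfl)] at h11
  norm_num at h11
end

section
/- Consistency of the min-max ball scheme for the normalized infinity Laplacian: Let u : ℝⁿ → ℝ be three times continuously differentiable on a neighborhood of a point x with ∇u(x) ≠ 0. Then, as r → 0⁺, (1/2)( max_{|y−x|=r} u(y) + min_{|y−x|=r} u(y) ) − u(x) = (r²/2) Δ_∞^N u(x) + O(r³), i.e. the difference between the left-hand side and (r²/2)Δ_∞^N u(x) is O(r³). -/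
/-!
Taylor's formula gives `u (x + h) = u x + ⟪p, h⟫ + ⟪A h, h⟫ / 2 + O(‖h‖³)` with `p = ∇u x` and
`A = D²u x`. On the sphere `‖h‖ = r` this quadratic model is maximal, up to `O(r³)`, at
`h = (r / ‖p‖) p`: writing `h = (r / ‖p‖) p + d`, the linear term loses `‖p‖ ‖d‖² / (2r)` while
the quadratic term gains at most `‖A‖ r ‖d‖`, a net gain of at most `‖A‖² r³ / (2‖p‖)`. Hence
`max u = u x + r ‖p‖ + (r² / 2) ⟪A p, p⟫ / ‖p‖² + O(r³)`; the same applied to `-u` gives the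
minimum, with `-r ‖p‖` instead, and the first-order terms cancel in the average.
-/

open RealInnerProductSpace Asymptotics

open Metric Topology

theorem isBigO_sub_sub_of_hasFDerivAt {E F : Type*} [NormedAddCommGroup E] [NormedSpace ℝ E]
    [NormedAddCommGroup F] [NormedSpace ℝ F] {f : E → F} {f' : E → E →L[ℝ] F} {x : E}
    {L : E →L[ℝ] F} {k : ℕ} (hf : ∀ᶠ z in 𝓝 x, HasFDerivAt f (f' z) z)
    (hf' : (fun z => f' z - L) =O[𝓝 x] fun z => ‖z - x‖ ^ k) :
    (fun y => f y - f x - L (y - x)) =O[𝓝 x] fun y => ‖y - x‖ ^ (k + 1) := by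
  obtain ⟨C, hC, hf'C⟩ := hf'.exists_pos
  obtain ⟨δ, hδ, near⟩ := Metric.eventually_nhds_iff_ball.1 (hf.and hf'C.bound)
  refine IsBigO.of_bound C (Metric.eventually_nhds_iff_ball.2 ⟨δ, hδ, fun y hy => ?_⟩)
  have hsub : closedBall x ‖y - x‖ ⊆ ball x δ :=
    closedBall_subset_ball (mem_ball_iff_norm.1 hy)
  have bound : ∀ z ∈ closedBall x ‖y - x‖, ‖f' z - L‖ ≤ C * ‖y - x‖ ^ k := by
    intro z hz
    refine ((near z (hsub hz)).2).trans ?_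
    rw [norm_pow, norm_norm]
    gcongr
    exact mem_closedBall_iff_norm.1 hz
  calc ‖f y - f x - L (y - x)‖
      ≤ C * ‖y - x‖ ^ k * ‖y - x‖ :=
        (convex_closedBall x ‖y - x‖).norm_image_sub_le_of_norm_hasFDerivWithin_le'
          (fun z hz => (near z (hsub hz)).1.hasFDerivWithinAt) bound
          (mem_closedBall_self (norm_nonneg _)) (mem_closedBall_iff_norm.2 le_rfl)
    _ = C * ‖‖y - x‖ ^ (k + 1)‖ := by rw [norm_pow, norm_norm]; ring

section

variable {E : Type*} [NormedAddCommGroup E] [InnerProductSpace ℝ E]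

noncomputable def quadraticModel (p : E) (A : E →L[ℝ] E) (h : E) : ℝ := ⟪p, h⟫ + ⟪A h, h⟫ / 2

theorem inner_sub_of_norm_eq {v w : E} (h : ‖w‖ = ‖v‖) : ⟪v, w - v⟫ = -(‖w - v‖ ^ 2 / 2) := by
  have := norm_sub_sq_real w v
  rw [inner_sub_right, real_inner_self_eq_norm_sq, real_inner_comm]
  rw [h] at this
  linarith

theorem inner_map_self_sub_inner_map_self_le (A : E →L[ℝ] E) (v w : E) :
    ⟪A w, w⟫ - ⟪A v, v⟫ ≤ ‖A‖ * (‖w‖ + ‖v‖) * ‖w - v‖ := by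
  have split : ⟪A w, w⟫ - ⟪A v, v⟫ = ⟪A w, w - v⟫ + ⟪A (w - v), v⟫ := by
    simp only [inner_sub_right, map_sub, inner_sub_left]; ring
  have h₁ : ⟪A w, w - v⟫ ≤ ‖A‖ * ‖w‖ * ‖w - v‖ :=
    (real_inner_le_norm _ _).trans (by gcongr; exact A.le_opNorm w)
  have h₂ : ⟪A (w - v), v⟫ ≤ ‖A‖ * ‖w - v‖ * ‖v‖ :=
    (real_inner_le_norm _ _).trans (by gcongr; exact A.le_opNorm _)
  rw [split]
  linarith

theorem quadraticModel_le_of_norm_eq {p w : E} {r : ℝ} (A : E →L[ℝ] E) (hp : p ≠ 0)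
    (hr : 0 < r) (hw : ‖w‖ = r) :
    quadraticModel p A w ≤ quadraticModel p A ((r / ‖p‖) • p) + ‖A‖ ^ 2 / (2 * ‖p‖) * r ^ 3 := by
  have hp₀ : 0 < ‖p‖ := norm_pos_iff.2 hp
  set v := (r / ‖p‖) • p
  set t := ‖w - v‖
  have hv : ‖v‖ = r := by
    rw [norm_smul, Real.norm_eq_abs, abs_of_pos (by positivity)]; field_simp
  have linear : ⟪p, w⟫ - ⟪p, v⟫ = -(‖p‖ / r * (t ^ 2 / 2)) := by
    have hvd : ⟪v, w - v⟫ = r / ‖p‖ * ⟪p, w - v⟫ := real_inner_smul_left _ _ _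
    rw [inner_sub_of_norm_eq (hw.trans hv.symm)] at hvd
    rw [← inner_sub_right]
    field_simp at hvd ⊢
    linarith
  have quadratic : ⟪A w, w⟫ - ⟪A v, v⟫ ≤ 2 * ‖A‖ * r * t := by
    have := inner_map_self_sub_inner_map_self_le A v w
    rw [hw, hv] at this
    linarith
  -- the concave bound in `t` is largest at `t = ‖A‖ r² / ‖p‖`
  have amgm : ‖A‖ * r * t - ‖p‖ / r * (t ^ 2 / 2) ≤ ‖A‖ ^ 2 / (2 * ‖p‖) * r ^ 3 := by
    have key : ‖A‖ ^ 2 / (2 * ‖p‖) * r ^ 3 - (‖A‖ * r * t - ‖p‖ / r * (t ^ 2 / 2))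
        = (‖p‖ * t - ‖A‖ * r ^ 2) ^ 2 / (2 * r * ‖p‖) := by
      field_simp; ring
    have : 0 ≤ (‖p‖ * t - ‖A‖ * r ^ 2) ^ 2 / (2 * r * ‖p‖) := by positivity
    linarith
  unfold quadraticModel
  linarith

theorem sSup_image_sphere_sub_quadraticModel_isBigO {u : E → ℝ} {x p : E} {A : E →L[ℝ] E}
    (hp : p ≠ 0)
    (hu : (fun y => u y - u x - quadraticModel p A (y - x)) =O[𝓝 x] fun y => ‖y - x‖ ^ 3) :
    (fun r : ℝ => sSup (u '' sphere x r) - u x - quadraticModel p A ((r / ‖p‖) • p))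
      =O[𝓝[>] 0] fun r => r ^ 3 := by
  obtain ⟨C, hC⟩ := hu.bound
  obtain ⟨δ, hδ, taylor⟩ := Metric.eventually_nhds_iff_ball.1 hC
  set K := ‖A‖ ^ 2 / (2 * ‖p‖)
  refine IsBigO.of_bound (C + K) ?_
  filter_upwards [Ioo_mem_nhdsGT hδ] with r ⟨hr, hrδ⟩
  set v := (r / ‖p‖) • p
  have hv : ‖v‖ = r := by
    rw [norm_smul, Real.norm_eq_abs, abs_of_pos (by positivity)]
    field_simp [norm_ne_zero_iff.2 hp]
  have taylor_sphere : ∀ y ∈ sphere x r, |u y - u x - quadraticModel p A (y - x)| ≤ C * r ^ 3 := by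
    intro y hy
    rw [mem_sphere_iff_norm] at hy
    simpa [hy, abs_of_pos hr] using taylor y (mem_ball_iff_norm.2 (hy.trans_lt hrδ))
  have hxv : x + v ∈ sphere x r := by simpa [mem_sphere_iff_norm] using hv
  have le_bound : ∀ y ∈ sphere x r, u y ≤ u x + quadraticModel p A v + (C + K) * r ^ 3 := by
    intro y hy
    have h₁ := (abs_le.1 (taylor_sphere y hy)).2
    have h₂ := quadraticModel_le_of_norm_eq A hp hr (mem_sphere_iff_norm.1 hy)
    linarith
  have upper : sSup (u '' sphere x r) ≤ u x + quadraticModel p A v + (C + K) * r ^ 3 :=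
    csSup_le ⟨_, Set.mem_image_of_mem u hxv⟩ (Set.forall_mem_image.2 le_bound)
  have lower : u (x + v) ≤ sSup (u '' sphere x r) :=
    le_csSup ⟨_, Set.forall_mem_image.2 le_bound⟩ (Set.mem_image_of_mem u hxv)
  have at_xv := (abs_le.1 (taylor_sphere _ hxv)).1
  rw [add_sub_cancel_left] at at_xv
  have : 0 ≤ K * r ^ 3 := by positivity
  rw [Real.norm_eq_abs, Real.norm_eq_abs, abs_of_pos (pow_pos hr 3), abs_le]
  constructor <;> linarith

theorem hasFDerivAt_inner_map_sub_self_div_two {A : E →L[ℝ] E}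
    (hA : (A : E →ₗ[ℝ] E).IsSymmetric) (x z : E) :
    HasFDerivAt (fun y => ⟪A (y - x), y - x⟫ / 2) (innerSL ℝ (A (z - x))) z := by
  have hsub : HasFDerivAt (fun y : E => y - x) (ContinuousLinearMap.id ℝ E) z :=
    (hasFDerivAt_id z).sub_const x
  have h := ((A.hasFDerivAt.comp z hsub).inner ℝ hsub).const_smul (2⁻¹ : ℝ)
  refine (h.congr_fderiv ?_).congr_of_eventuallyEq (.of_forall fun y => ?_)
  · ext w
    simp only [Function.comp_apply, ContinuousLinearMap.comp_id, smul_apply,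
      ContinuousLinearMap.comp_apply, ContinuousLinearMap.prod_apply, ContinuousLinearMap.id_apply,
      fderivInnerCLM_apply, smul_eq_mul, coe_innerSL_apply]
    have := hA (z - x) w
    rw [ContinuousLinearMap.coe_coe, real_inner_comm _ (z - x)] at this
    linarith
  · simp only [Function.comp_apply, Pi.smul_apply, smul_eq_mul]
    ring

variable [CompleteSpace E]

theorem ContDiffAt.gradient {u : E → ℝ} {x : E} {m n : WithTop ℕ∞} (hu : ContDiffAt ℝ n u x)
    (hmn : m + 1 ≤ n) : ContDiffAt ℝ m (gradient u) x :=
  (InnerProductSpace.toDual ℝ E).symm.contDiff.contDiffAt.comp x (hu.fderiv_right hmn)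

theorem inner_fderiv_gradient_apply (u : E → ℝ) (x v w : E) :
    ⟪fderiv ℝ (gradient u) x v, w⟫ = fderiv ℝ (fderiv ℝ u) x v w := by
  have : gradient u = (InnerProductSpace.toDual ℝ E).symm ∘ fderiv ℝ u := rfl
  rw [this, LinearIsometryEquiv.comp_fderiv]
  exact InnerProductSpace.toDual_symm_apply

theorem IsSymmSndFDerivAt.isSymmetric_fderiv_gradient {u : E → ℝ} {x : E}
    (hu : IsSymmSndFDerivAt ℝ u x) : (fderiv ℝ (gradient u) x : E →ₗ[ℝ] E).IsSymmetric := by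
  intro v w
  rw [ContinuousLinearMap.coe_coe, real_inner_comm _ v, inner_fderiv_gradient_apply,
    inner_fderiv_gradient_apply, hu]

theorem isBigO_sub_quadraticModel_of_contDiffAt {u : E → ℝ} {x : E} (hu : ContDiffAt ℝ 3 u x) :
    (fun y => u y - u x - quadraticModel (gradient u x) (fderiv ℝ (gradient u) x) (y - x))
      =O[𝓝 x] fun y => ‖y - x‖ ^ 3 := by
  set A := fderiv ℝ (gradient u) x
  have hgrad : ContDiffAt ℝ 2 (gradient u) x := hu.gradient (m := 2) (by norm_num)
  have hHess : (fun z => fderiv ℝ (gradient u) z - A) =O[𝓝 x] fun z => ‖z - x‖ ^ 1 := by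
    have hD : DifferentiableAt ℝ (fderiv ℝ (gradient u)) x :=
      (hgrad.fderiv_right (m := 1) (by norm_num)).differentiableAt (by norm_num)
    simpa using hD.hasFDerivAt.isBigO_sub
  have gradient_taylor : (fun y => gradient u y - gradient u x - A (y - x))
      =O[𝓝 x] fun y => ‖y - x‖ ^ 2 :=
    isBigO_sub_sub_of_hasFDerivAt ((hgrad.eventually (by simp)).mono fun z hz =>
      (hz.differentiableAt (by norm_num)).hasFDerivAt) hHess
  have hA : (A : E →ₗ[ℝ] E).IsSymmetric :=
    (hu.isSymmSndFDerivAt (by simp; norm_num)).isSymmetric_fderiv_gradient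
  have hderiv : ∀ᶠ z in 𝓝 x, HasFDerivAt (fun y => u y - ⟪A (y - x), y - x⟫ / 2)
      (innerSL ℝ (gradient u z - A (z - x))) z := by
    refine (hu.eventually (by simp)).mono fun z hz => ?_
    rw [map_sub]
    exact (hasGradientAt_iff_hasFDerivAt.1 ((hz.differentiableAt (by norm_num)).hasGradientAt)).sub
      (hasFDerivAt_inner_map_sub_self_div_two hA x z)
  have := isBigO_sub_sub_of_hasFDerivAt (L := innerSL ℝ (gradient u x)) hderiv
    (isBigO_norm_left.1 (gradient_taylor.norm_left.congr_left fun z => by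
      rw [← map_sub, innerSL_apply_norm, sub_right_comm]))
  refine this.congr_left fun y => ?_
  simp only [quadraticModel, sub_self, map_zero, inner_zero_left, zero_div, sub_zero,
    innerSL_apply_apply]
  ring

end

theorem minmax_scheme_consistency_inf_laplacian
    {n : ℕ} (u : EuclideanSpace ℝ (Fin n) → ℝ)
    (x : EuclideanSpace ℝ (Fin n))
    (hu : ContDiffAt ℝ 3 u x)
    (hgrad : gradient u x ≠ 0) :
    (fun r : ℝ =>
        (sSup (u '' Metric.sphere x r) + sInf (u '' Metric.sphere x r)) / 2
          - u x
          - r ^ 2 / 2 *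
              ((‖gradient u x‖ ^ 2)⁻¹ *
                ⟪fderiv ℝ (gradient u) x (gradient u x), gradient u x⟫))
      =O[nhdsWithin 0 (Set.Ioi 0)] fun r : ℝ => r ^ 3 := by
  have taylor := isBigO_sub_quadraticModel_of_contDiffAt hu
  have max_bound := sSup_image_sphere_sub_quadraticModel_isBigO hgrad taylor
  have min_bound := sSup_image_sphere_sub_quadraticModel_isBigO (u := fun y => -u y)
    (A := -fderiv ℝ (gradient u) x) (neg_ne_zero.2 hgrad)
    (taylor.neg_left.congr_left fun y => by
      simp only [quadraticModel, inner_neg_left, neg_apply]; ring)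
  refine ((max_bound.sub min_bound).const_mul_left (1 / 2)).congr_left fun r => ?_
  rw [Real.sInf_def, ← Set.image_neg_eq_neg, Set.image_image]
  simp only [quadraticModel, norm_neg, smul_neg, map_neg, neg_apply,
    inner_neg_left, inner_neg_right, neg_neg, map_smul, real_inner_smul_left,
    real_inner_smul_right]
  field_simp
  ring
end

section
/- Location of extrema on small spheres: Let u : ℝⁿ → ℝ be three times continuously differentiable on a neighborhood of a point x with ∇u(x) ≠ 0. Then, as r → 0⁺, every maximizer y⁺_r of u over the sphere {y : |y − x| = r} satisfies |y⁺_r − (x + r ∇u(x)/|∇u(x)|)| = O(r²), and every minimizer y⁻_r satisfies |y⁻_r − (x − r ∇u(x)/|∇u(x)|)| = O(r²). -/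
/-!
Write a point of the sphere as `x + h` with `‖h‖ = r`, and let `k = r • e` with
`e = ∇u(x) / ‖∇u(x)‖`. If `x + h` is a maximizer then `u (x + k) ≤ u (x + h)`, and the
second-order Taylor expansion with `O(r³)` remainder turns this into
`‖∇u(x)‖ (r - ⟪e, h⟫) ≤ ‖D²u(x)‖ r ‖h - k‖ + O(r³)`: the Hessian terms at `h` and `k` differ by
only `O(r ‖h - k‖)`. On the sphere `‖h - k‖² = 2r (r - ⟪e, h⟫)`, so `t = ‖h - k‖` satisfies
`t² ≤ a r² t + b r⁴`, which forces `t = O(r²)`. Minimizers of `u` are maximizers of `-u`.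
-/

open Metric Filter Topology RealInnerProductSpace

section Taylor

variable {E F : Type*} [NormedAddCommGroup E] [NormedSpace ℝ E]
  [NormedAddCommGroup F] [NormedSpace ℝ F]

lemma norm_sub_le_mul_norm_pow_succ_of_hasFDerivAt {f : E → F} {f' : E → E →L[ℝ] F}
    {x y : E} {ρ C : ℝ} {m : ℕ} (hf : ∀ z ∈ ball x ρ, HasFDerivAt f (f' z) z)
    (hf' : ∀ z ∈ ball x ρ, ‖f' z‖ ≤ C * ‖z - x‖ ^ m) (hC : 0 ≤ C) (hy : y ∈ ball x ρ) :
    ‖f y - f x‖ ≤ C * ‖y - x‖ ^ (m + 1) := by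
  have hseg : segment ℝ x y ⊆ ball x ρ :=
    (convex_ball x ρ).segment_subset (mem_ball_self (pos_of_mem_ball hy)) hy
  have hbound : ∀ z ∈ segment ℝ x y, ‖f' z‖ ≤ C * ‖y - x‖ ^ m := fun z hz =>
    (hf' z (hseg hz)).trans (by gcongr; exact norm_sub_le_of_mem_segment hz)
  calc ‖f y - f x‖ ≤ C * ‖y - x‖ ^ m * ‖y - x‖ :=
        (convex_segment x y).norm_image_sub_le_of_norm_hasFDerivWithin_le
          (fun z hz => (hf z (hseg hz)).hasFDerivWithinAt) hbound
          (left_mem_segment ℝ x y) (right_mem_segment ℝ x y)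
    _ = C * ‖y - x‖ ^ (m + 1) := by ring

lemma ContinuousLinearMap.hasFDerivAt_apply_sub_apply_sub (B : E →L[ℝ] E →L[ℝ] F)
    (hB : ∀ v w, B v w = B w v) (x z : E) :
    HasFDerivAt (fun z => B (z - x) (z - x)) ((2 : ℝ) • B (z - x)) z := by
  have hsub : HasFDerivAt (fun z : E => z - x) (ContinuousLinearMap.id ℝ E) z :=
    (hasFDerivAt_id z).sub_const x
  refine ((B.hasFDerivAt.comp z hsub).clm_apply hsub).congr_fderiv ?_
  ext v
  simp [two_smul, hB v]

lemma ContDiffAt.exists_norm_taylor_two_le {u : E → F} {x : E} (hu : ContDiffAt ℝ 3 u x) :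
    ∃ K ρ : ℝ, 0 ≤ K ∧ 0 < ρ ∧ ∀ h : E, ‖h‖ < ρ →
      ‖u (x + h) - u x - fderiv ℝ u x h - (2⁻¹ : ℝ) • fderiv ℝ (fderiv ℝ u) x h h‖ ≤
        K * ‖h‖ ^ 3 := by
  set B := fderiv ℝ (fderiv ℝ u) x
  have hB : (fderiv ℝ (fderiv ℝ u) · - B) =O[𝓝 x] (· - x) :=
    (((hu.fderiv_right (m := 2) (by norm_num)).fderiv_right (m := 1) (by norm_num)).differentiableAt
      (by norm_num)).isBigO_sub
  obtain ⟨K, hK, hKB⟩ := hB.exists_nonneg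
  obtain ⟨ρ, hρ, hball⟩ :=
    Metric.eventually_nhds_iff_ball.1 ((hu.eventually (by simp)).and hKB.bound)
  have hdu : ∀ z ∈ ball x ρ, HasFDerivAt u (fderiv ℝ u z) z := fun z hz =>
    ((hball z hz).1.differentiableAt (by norm_num)).hasFDerivAt
  have hd2u : ∀ z ∈ ball x ρ, HasFDerivAt (fderiv ℝ u) (fderiv ℝ (fderiv ℝ u) z) z :=
    fun z hz => (((hball z hz).1.fderiv_right (m := 2) (by norm_num)).differentiableAt
      (by norm_num)).hasFDerivAt
  have hfirst : ∀ z ∈ ball x ρ,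
      ‖fderiv ℝ u z - fderiv ℝ u x - B (z - x)‖ ≤ K * ‖z - x‖ ^ 2 := by
    intro z hz
    have hlin : ∀ w, HasFDerivAt (fun w => B (w - x)) B w := fun w =>
      by simpa using B.hasFDerivAt (x := w)
    simpa [sub_right_comm] using norm_sub_le_mul_norm_pow_succ_of_hasFDerivAt (m := 1)
      (fun w hw => (hd2u w hw).sub (hlin w)) (fun w hw => by simpa using (hball w hw).2) hK hz
  have hsymm : ∀ v w, B v w = B w v := fun v w => hu.isSymmSndFDerivAt (by norm_num) v w
  set P : E → F := fun z => fderiv ℝ u x (z - x) + (2⁻¹ : ℝ) • B (z - x) (z - x)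
  have hP : ∀ z, HasFDerivAt P (fderiv ℝ u x + B (z - x)) z := by
    intro z
    have hlin : HasFDerivAt (fun z => fderiv ℝ u x (z - x)) (fderiv ℝ u x) z := by
      simpa using (fderiv ℝ u x).hasFDerivAt (x := z)
    refine (hlin.add ((B.hasFDerivAt_apply_sub_apply_sub hsymm x z).const_smul (2⁻¹ : ℝ)))
      |>.congr_fderiv ?_
    rw [smul_smul]
    norm_num
  refine ⟨K, ρ, hK, hρ, fun h hh => ?_⟩
  have hxh : x + h ∈ ball x ρ := by simpa using hh
  have := norm_sub_le_mul_norm_pow_succ_of_hasFDerivAt (f := u - P) (m := 2)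
    (fun z hz => (hdu z hz).sub (hP z)) (fun z hz => by simpa [sub_sub] using hfirst z hz) hK hxh
  have hPx : P x = 0 := by simp [P]
  have hPxh : P (x + h) = fderiv ℝ u x h + (2⁻¹ : ℝ) • B h h := by simp only [P, add_sub_cancel_left]
  rw [Pi.sub_apply, Pi.sub_apply, hPx, hPxh, sub_zero, add_sub_cancel_left] at this
  convert this using 2
  abel

end Taylor

lemma le_add_of_sq_le_mul_add_sq {t a b : ℝ} (ha : 0 ≤ a) (hb : 0 ≤ b)
    (h : t ^ 2 ≤ a * t + b ^ 2) : t ≤ a + b := by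
  nlinarith

lemma ContinuousLinearMap.norm_apply_self_sub_apply_self_le {E F : Type*}
    [SeminormedAddCommGroup E] [NormedSpace ℝ E] [SeminormedAddCommGroup F] [NormedSpace ℝ F]
    (B : E →L[ℝ] E →L[ℝ] F) (h k : E) :
    ‖B h h - B k k‖ ≤ ‖B‖ * (‖h‖ + ‖k‖) * ‖h - k‖ := by
  have hsplit : B h h - B k k = B h (h - k) + B (h - k) k := by
    simp only [map_sub, sub_apply]
    abel
  calc ‖B h h - B k k‖ ≤ ‖B‖ * ‖h‖ * ‖h - k‖ + ‖B‖ * ‖h - k‖ * ‖k‖ := by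
        rw [hsplit]
        exact (norm_add_le _ _).trans (add_le_add (B.le_opNorm₂ _ _) (B.le_opNorm₂ _ _))
    _ = ‖B‖ * (‖h‖ + ‖k‖) * ‖h - k‖ := by ring

lemma norm_sub_smul_sq_of_norm_eq {E : Type*} [NormedAddCommGroup E] [InnerProductSpace ℝ E]
    {e h : E} {r : ℝ} (he : ‖e‖ = 1) (hh : ‖h‖ = r) :
    ‖h - r • e‖ ^ 2 = 2 * r * (r - ⟪e, h⟫) := by
  rw [norm_sub_sq_real, real_inner_smul_right, norm_smul, hh, he, real_inner_comm,
    Real.norm_eq_abs, mul_one, sq_abs]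
  ring

lemma sub_le_of_le_of_norm_taylor_two_le {E : Type*} [NormedAddCommGroup E] [NormedSpace ℝ E]
    {u : E → ℝ} {x h k : E} {L : E →L[ℝ] ℝ} {B : E →L[ℝ] E →L[ℝ] ℝ} {K r : ℝ}
    (hT : ∀ v : E, ‖v‖ = r → ‖u (x + v) - u x - L v - (2⁻¹ : ℝ) • B v v‖ ≤ K * ‖v‖ ^ 3)
    (hh : ‖h‖ = r) (hk : ‖k‖ = r) (hle : u (x + k) ≤ u (x + h)) :
    L k - L h ≤ ‖B‖ * r * ‖h - k‖ + 2 * K * r ^ 3 := by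
  have Th := hT h hh
  have Tk := hT k hk
  have hB := (B.norm_apply_self_sub_apply_self_le h k).trans_eq' (Real.norm_eq_abs _)
  rw [hh, Real.norm_eq_abs, abs_le, smul_eq_mul] at Th
  rw [hk, Real.norm_eq_abs, abs_le, smul_eq_mul] at Tk
  rw [abs_le, hh, hk] at hB
  linarith

section Sphere

variable {E : Type*} [NormedAddCommGroup E] [InnerProductSpace ℝ E] [CompleteSpace E]

lemma gradient_fun_neg (u : E → ℝ) (x : E) : gradient (fun y => -u y) x = -gradient u x := by
  simp [gradient]

theorem exists_norm_sub_le_of_isMaxOn_sphere {u : E → ℝ} {x : E} (hu : ContDiffAt ℝ 3 u x)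
    (hgrad : gradient u x ≠ 0) :
    ∃ C r₀ : ℝ, 0 < C ∧ 0 < r₀ ∧ ∀ r : ℝ, 0 < r → r < r₀ → ∀ y ∈ sphere x r,
      IsMaxOn u (sphere x r) y →
        ‖y - (x + r • (‖gradient u x‖⁻¹ • gradient u x))‖ ≤ C * r ^ 2 := by
  obtain ⟨K, ρ, hK, hρ, hT⟩ := hu.exists_norm_taylor_two_le
  set g := gradient u x with hg
  set G := ‖g‖
  set e := G⁻¹ • g
  set B := fderiv ℝ (fderiv ℝ u) x
  have hG : 0 < G := norm_pos_iff.2 hgrad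
  have he : ‖e‖ = 1 := norm_smul_inv_norm hgrad
  have hge : g = G • e := by simp [e, smul_smul, hG.ne']
  refine ⟨2 * ‖B‖ / G + √(4 * K / G) + 1, ρ, by positivity, hρ,
    fun r hr hrρ y hy hmax => ?_⟩
  set h := y - x
  set t := ‖h - r • e‖
  have hh : ‖h‖ = r := by rwa [mem_sphere, dist_eq_norm] at hy
  have hk : ‖r • e‖ = r := by rw [norm_smul, he, Real.norm_of_nonneg hr.le, mul_one]
  have hcomp : G * (r - ⟪e, h⟫) ≤ ‖B‖ * r * t + 2 * K * r ^ 3 := by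
    have hL : ∀ v, fderiv ℝ u x v = G * ⟪e, v⟫ := fun v => by
      rw [← inner_gradient_left, ← hg, hge, real_inner_smul_left]
    have hle : u (x + r • e) ≤ u (x + h) := by
      rw [add_sub_cancel]
      exact hmax (by rwa [mem_sphere, dist_eq_norm, add_sub_cancel_left])
    have := sub_le_of_le_of_norm_taylor_two_le (fun v hv => hT v (by rwa [hv])) hh hk hle
    rw [hL, hL, real_inner_smul_right, real_inner_self_eq_norm_sq, he] at this
    linarith
  have hsq : t ^ 2 ≤ 2 * ‖B‖ / G * r ^ 2 * t + (√(4 * K / G) * r ^ 2) ^ 2 := by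
    rw [norm_sub_smul_sq_of_norm_eq he hh, mul_pow, Real.sq_sqrt (by positivity)]
    have := mul_le_mul_of_nonneg_left hcomp (by positivity : 0 ≤ 2 * r / G)
    field_simp at this ⊢
    nlinarith
  calc ‖y - (x + r • e)‖ = t := by rw [sub_add_eq_sub_sub]
    _ ≤ 2 * ‖B‖ / G * r ^ 2 + √(4 * K / G) * r ^ 2 :=
      le_add_of_sq_le_mul_add_sq (by positivity) (by positivity) hsq
    _ ≤ (2 * ‖B‖ / G + √(4 * K / G) + 1) * r ^ 2 := by nlinarith

end Sphere

theorem extrema_location_on_spheres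
    {n : ℕ} (u : EuclideanSpace ℝ (Fin n) → ℝ)
    (x : EuclideanSpace ℝ (Fin n))
    (hu : ContDiffAt ℝ 3 u x)
    (hgrad : gradient u x ≠ 0) :
    ∃ C r₀ : ℝ, 0 < C ∧ 0 < r₀ ∧ ∀ r : ℝ, 0 < r → r < r₀ →
      (∀ y ∈ Metric.sphere x r, IsMaxOn u (Metric.sphere x r) y →
        ‖y - (x + r • (‖gradient u x‖⁻¹ • gradient u x))‖ ≤ C * r ^ 2) ∧
      (∀ y ∈ Metric.sphere x r, IsMinOn u (Metric.sphere x r) y →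
        ‖y - (x - r • (‖gradient u x‖⁻¹ • gradient u x))‖ ≤ C * r ^ 2) := by
  obtain ⟨C₁, r₁, hC₁, hr₁, hmax⟩ := exists_norm_sub_le_of_isMaxOn_sphere hu hgrad
  obtain ⟨C₂, r₂, hC₂, hr₂, hmin⟩ := exists_norm_sub_le_of_isMaxOn_sphere hu.neg
    (by rwa [gradient_fun_neg, neg_ne_zero])
  refine ⟨max C₁ C₂, min r₁ r₂, by positivity, by positivity, fun r hr hrr => ⟨?_, ?_⟩⟩
  · intro y hy hy_max
    refine (hmax r hr (hrr.trans_le (min_le_left _ _)) y hy hy_max).trans ?_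
    gcongr
    exact le_max_left _ _
  · intro y hy hy_min
    have := hmin r hr (hrr.trans_le (min_le_right _ _)) y hy hy_min.neg
    rw [gradient_fun_neg, norm_neg, smul_neg, smul_neg, ← sub_eq_add_neg] at this
    refine this.trans ?_
    gcongr
    exact le_max_right _ _
end
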